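/- arXiv:2001.05584 — 6 statements merged into one kernel-verified Lean document; each statement's English description precedes it below -/
import Mathlib

section
/- Suppose g_n ∈ GL(d,ℝ) is a sequence such that [g_n] converges in P(End(ℝ^d)) to [T] where T is a nonzero endomorphism with rank(T) = 1 and image(T) ⊕ ker(T) = ℝ^d. Then for all sufficiently large n, g_n is proximal, and the attracting eigenlines ℓ⁺_{g_n} converge in P(ℝ^d) to the line image(T). -/
open Matrix Topology Filter
open scoped MatrixGroups

noncomputable section

abbrev Vd (d : ℕ) := Fin d → ℝ
abbrev Md (d : ℕ) := Matrix (Fin d) (Fin d) ℝ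

open scoped Classical in
/-- The multiset of absolute values of the complex eigenvalues (roots of the
characteristic polynomial over `ℂ`, with multiplicity) of a real `d × d` matrix. -/
def eigMods {d : ℕ} (g : Md d) : Multiset ℝ :=
  ((g.charpoly.map (algebraMap ℝ ℂ)).roots).map (fun z => ‖z‖)

open scoped Classical in
/-- `g` is proximal: the largest modulus of an eigenvalue is attained exactly once. -/
def IsProximal {d : ℕ} (g : Md d) : Prop :=
  ∃ r ∈ eigMods g, (eigMods g).count r = 1 ∧ ∀ s ∈ eigMods g, s ≤ r

/-- `ℓ` is the attracting eigenline of `g`: the eigenspace of a real eigenvalue of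
maximal modulus, of dimension one. -/
def IsTopEigenline {d : ℕ} (g : Md d) (ℓ : Submodule ℝ (Vd d)) : Prop :=
  ∃ μ : ℝ, (∀ s ∈ eigMods g, s ≤ |μ|) ∧
    ℓ = Module.End.eigenspace (Matrix.toLin' g) μ ∧ Module.finrank ℝ ℓ = 1

/-- `C` is the cone over a properly convex domain `Ω ⊂ P(ℝ^d)`: an open convex
cone, nonempty, whose closure contains no line (salient). -/
def IsProperCone {d : ℕ} (C : Set (Vd d)) : Prop :=
  IsOpen C ∧ Convex ℝ C ∧ C.Nonempty ∧
    (∀ v ∈ C, ∀ t : ℝ, 0 < t → t • v ∈ C) ∧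
    (∀ v ∈ closure C, -v ∈ closure C → v = 0)

/-- `g` induces an automorphism of the properly convex domain with cone `C`. -/
def ConeAut {d : ℕ} (C : Set (Vd d)) (g : Md d) : Prop :=
  IsUnit g ∧ (fun v => g.mulVec v) '' C = C

/-- Gauge `M(u/v) = inf{t > 0 : t v - u ∈ closure C}`. -/
def gaugeM {d : ℕ} (C : Set (Vd d)) (u v : Vd d) : ℝ :=
  sInf {t : ℝ | 0 < t ∧ t • v - u ∈ closure C}

/-- The Hilbert distance between the projective points `[u]`, `[v]` of the properly
convex domain with cone `C` : `H([u],[v]) = (1/2) log (M(u/v) M(v/u))`. -/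
def hilbertDist {d : ℕ} (C : Set (Vd d)) (u v : Vd d) : ℝ :=
  (1/2) * Real.log (gaugeM C u v * gaugeM C v u)

/-- The closed projective segment `[[u],[v]]` is contained in `∂Ω`. -/
def BSeg {d : ℕ} (C : Set (Vd d)) (u v : Vd d) : Prop :=
  ∀ s t : ℝ, 0 ≤ s → 0 ≤ t → s • u + t • v ∉ C

/-- `[v]` belongs to the open face `F_Ω([u])`: either `[v] = [u]`, or some open
projective segment contained in `closure Ω` contains both `[u]` and `[v]`. -/
def InFace {d : ℕ} (C : Set (Vd d)) (u v : Vd d) : Prop :=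
  v ∈ closure C ∧ ((∃ t : ℝ, 0 < t ∧ v = t • u) ∨
    ∃ ε : ℝ, 0 < ε ∧ u - ε • v ∈ closure C ∧ v - ε • u ∈ closure C)

/-- `[v]` is an extreme point of `closure Ω`: it is not in the interior of any
nondegenerate projective segment contained in `closure Ω`. -/
def IsExtremePt {d : ℕ} (C : Set (Vd d)) (v : Vd d) : Prop :=
  v ∈ closure C ∧ v ≠ 0 ∧ ∀ a ∈ closure C, ∀ b ∈ closure C,
    ∀ s t : ℝ, 0 < s → 0 < t → v = s • a + t • b → ∃ c : ℝ, a = c • b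


/-- The quotient topology on the projective space `P(V)`. -/
instance projTopology {K V : Type*} [DivisionRing K] [AddCommGroup V] [Module K V]
    [TopologicalSpace V] : TopologicalSpace (Projectivization K V) :=
  inferInstanceAs (TopologicalSpace (Quotient (projectivizationSetoid K V)))

/-- The set of projective points with a representative in `A`. -/
def projSet {d : ℕ} (A : Set (Vd d)) : Set (Projectivization ℝ (Vd d)) :=
  {x | ∃ (v : Vd d) (hv : v ≠ 0), v ∈ A ∧ x = Projectivization.mk ℝ v hv}

/-- The action of `γ ∈ GL(d,ℝ)` on the projective space `P(ℝ^d)`. -/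
def pAct {d : ℕ} (γ : GL (Fin d) ℝ) : Projectivization ℝ (Vd d) → Projectivization ℝ (Vd d) :=
  Projectivization.map (Matrix.toLin' (↑γ : Md d)) (by
    have : Function.LeftInverse (Matrix.toLin' (↑γ⁻¹ : Md d)) (Matrix.toLin' (↑γ : Md d)) := by
      intro v
      simp only [Matrix.toLin'_apply, Matrix.mulVec_mulVec]
      rw [Matrix.coe_units_inv, Matrix.nonsing_inv_mul _ ((Matrix.isUnit_iff_isUnit_det _).mp γ.isUnit), Matrix.one_mulVec]
    exact this.injective)

/-- `T` lies in the closure of `Λ` in `P(End(ℝ^d))`. -/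
def InEndClosure {d : ℕ} (Λ : Set (Md d)) (T : Md d) : Prop :=
  T ≠ 0 ∧ ∃ (g : ℕ → Md d) (c : ℕ → ℝ), (∀ n, g n ∈ Λ) ∧
    Tendsto (fun n => c n • g n) atTop (nhds T)


/-!
On its image `T` acts as a nonzero scalar `a` (the image is a line meeting the kernel trivially),
so `charpoly T = (X - a) X^(d-1)`. The complex roots of characteristic polynomials depend
continuously on the matrix, so for large `n` the matrix `c n • g n` has exactly one eigenvalue
`μ n` near `a`, all others being near `0`; by uniqueness `μ n` is real, hence dominant and simple,
which makes `g n` proximal. For `w` spanning the image of `T`, the vectors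
`adj (μ n - c n • g n) w` are eigenvectors, and they converge to `adj (a - T) w = a^(d-1) w`.
-/

open Polynomial Module

theorem Multiset.exists_map_univ_val_eq {α : Type*} {s : Multiset α} {m : ℕ}
    (h : Multiset.card s = m) : ∃ f : Fin m → α, Finset.univ.val.map f = s := by
  subst h
  refine ⟨fun i => s.toList.get (i.cast (by simp)), ?_⟩
  rw [Fin.univ_val_map]
  conv_rhs => rw [← Multiset.coe_toList s]
  congr 1
  exact List.ext_get (by simp) fun i _ _ => by simp

namespace LinearMap

variable {K V : Type*} [Field K] [AddCommGroup V] [Module K V]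

theorem exists_eigenvector_of_finrank_range_eq_one {f : V →ₗ[K] V}
    (hf : finrank K (range f) = 1) (hc : IsCompl (range f) (ker f)) :
    ∃ (w : V) (a : K), w ≠ 0 ∧ a ≠ 0 ∧ range f = K ∙ w ∧ f w = a • w := by
  have : range f ≠ ⊥ := by rintro h; rw [h] at hf; simp at hf
  obtain ⟨w, hw, hw0⟩ := Submodule.exists_mem_ne_zero_of_ne_bot this
  have hspan := eq_span_singleton_of_mem_of_finrank_eq_one hf hw hw0
  obtain ⟨a, ha⟩ := Submodule.mem_span_singleton.1 (hspan ▸ mem_range_self f w)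
  refine ⟨w, a, hw0, fun h0 => hw0 ?_, hspan, ha.symm⟩
  exact Submodule.disjoint_def.1 hc.disjoint w hw (by simp [← ha, h0])

theorem charpoly_eq_of_finrank_range_eq_one [FiniteDimensional K V] {f : V →ₗ[K] V}
    (hf : finrank K (range f) = 1) {w : V} (hw : w ≠ 0) {a : K} (ha : a ≠ 0)
    (hfw : f w = a • w) :
    f.charpoly = (X - C a) * X ^ (finrank K V - 1) := by
  have hdvd (μ : K) (k : ℕ) (hk : k ≤ finrank K (Module.End.eigenspace f μ)) :
      (X - C μ) ^ k ∣ f.charpoly :=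
    (le_rootMultiplicity_iff f.charpoly_monic.ne_zero).1 (hk.trans (finrank_eigenspace_le f μ))
  have hker : finrank K (ker f) = finrank K V - 1 := by
    have := finrank_range_add_finrank_ker f
    omega
  have hX : X ^ (finrank K V - 1) ∣ f.charpoly := by
    simpa using hdvd 0 _ (by rw [Module.End.eigenspace_zero, hker])
  have hXa : X - C a ∣ f.charpoly := by
    simpa using hdvd a 1 (Module.finrank_pos_iff_exists_ne_zero.2
      ⟨⟨w, Module.End.mem_eigenspace_iff.2 hfw⟩, by simpa using hw⟩)
  have hcop : IsCoprime (X - C a) (X ^ (finrank K V - 1)) := by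
    simpa using (isCoprime_X_sub_C_of_isUnit_sub (a := a) (b := 0) (by simpa using ha)).pow_right
  refine eq_of_monic_of_dvd_of_natDegree_le ((monic_X_sub_C a).mul (monic_X_pow _))
    f.charpoly_monic (hcop.mul_dvd hXa hX) ?_
  have : 0 < finrank K V := Module.finrank_pos_iff_exists_ne_zero.2 ⟨w, hw⟩
  rw [LinearMap.charpoly_natDegree, natDegree_mul (X_sub_C_ne_zero a) (pow_ne_zero _ X_ne_zero)]
  simp only [natDegree_X_sub_C, natDegree_pow, natDegree_X, mul_one]
  omega

end LinearMap

theorem Polynomial.conj_mem_aroots {p : ℝ[X]} {z : ℂ} (hz : z ∈ p.aroots ℂ) :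
    starRingEnd ℂ z ∈ p.aroots ℂ := by
  rw [mem_aroots] at hz ⊢
  exact ⟨hz.1, by simpa [hz.2] using aeval_algHom_apply Complex.conjAe.toAlgHom z p⟩

theorem Polynomial.aroots_X_sub_C_mul_X_pow {K L : Type*} [Field K] [Field L] [Algebra K L]
    (a : K) (m : ℕ) :
    ((X - C a) * X ^ m).aroots L = algebraMap K L a ::ₘ Multiset.replicate m 0 := by
  rw [aroots_mul ((monic_X_sub_C a).mul (monic_X_pow _)).ne_zero, aroots_X_sub_C, aroots_pow,
    aroots_X, Multiset.nsmul_singleton, Multiset.singleton_add]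

theorem eigMods_eq_map_aroots {d : ℕ} (M : Md d) : eigMods M = (M.charpoly.aroots ℂ).map (‖·‖) :=
  rfl

namespace Matrix

variable {n : Type*} [Fintype n] [DecidableEq n]

theorem exists_eigenvector_of_rank_eq_one {K : Type*} [Field K] {T : Matrix n n K}
    (hrank : T.rank = 1) (hc : IsCompl (LinearMap.range (toLin' T)) (LinearMap.ker (toLin' T))) :
    ∃ (w : n → K) (a : K), w ≠ 0 ∧ a ≠ 0 ∧ LinearMap.range (toLin' T) = K ∙ w ∧
      T *ᵥ w = a • w ∧ T.charpoly = (X - C a) * X ^ (Fintype.card n - 1) := by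
  have hrk : finrank K (LinearMap.range (toLin' T)) = 1 := by rwa [toLin'_apply']
  obtain ⟨w, a, hw, ha, hspan, hTw⟩ := LinearMap.exists_eigenvector_of_finrank_range_eq_one hrk hc
  refine ⟨w, a, hw, ha, hspan, by rwa [toLin'_apply] at hTw, ?_⟩
  simpa using LinearMap.charpoly_eq_of_finrank_range_eq_one hrk hw ha hTw

theorem charpoly_smul {K : Type*} [Field K] [Infinite K] (M : Matrix n n K) {c : K} (hc : c ≠ 0) :
    (c • M).charpoly = M.charpoly.scaleRoots c := by
  refine Polynomial.funext fun z => ?_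
  obtain ⟨t, rfl⟩ : ∃ t, z = c * t := ⟨c⁻¹ * z, by field_simp⟩
  rw [scaleRoots_eval_mul, eval_charpoly, eval_charpoly, charpoly_natDegree_eq_dim, ← det_smul,
    smul_sub, scalar_apply, scalar_apply, ← diagonal_smul]
  rfl

theorem aroots_charpoly_smul (M : Matrix n n ℝ) {c : ℝ} (hc : c ≠ 0) :
    (c • M).charpoly.aroots ℂ = (M.charpoly.aroots ℂ).map ((c : ℂ) * ·) := by
  rw [aroots, charpoly_smul M hc, map_scaleRoots _ _ _ (by simp [M.charpoly_monic.leadingCoeff]),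
    roots_scaleRoots _ (by simpa using hc)]
  rfl

theorem scalar_mulVec {R : Type*} [CommRing R] (a : R) (v : n → R) :
    scalar n a *ᵥ v = a • v := by
  rw [scalar_apply, ← smul_one_eq_diagonal, smul_mulVec, one_mulVec]

theorem mulVec_adjugate_mulVec_of_isRoot {R : Type*} [CommRing R] {M : Matrix n n R} {μ : R}
    (hμ : M.charpoly.IsRoot μ) (u : n → R) :
    M *ᵥ ((scalar n μ - M).adjugate *ᵥ u) = μ • ((scalar n μ - M).adjugate *ᵥ u) := by
  have h : (scalar n μ - M) *ᵥ ((scalar n μ - M).adjugate *ᵥ u) = 0 := by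
    rw [mulVec_mulVec, mul_adjugate, ← eval_charpoly, hμ.eq_zero, zero_smul, zero_mulVec]
  rw [sub_mulVec, sub_eq_zero, scalar_mulVec] at h
  exact h.symm

theorem adjugate_mulVec_of_mulVec_eq_smul {𝕜 : Type*} [NontriviallyNormedField 𝕜]
    {T : Matrix n n 𝕜} {a : 𝕜} {q : 𝕜[X]}
    (hT : T.charpoly = (X - C a) * q) {w : n → 𝕜} (hw : T *ᵥ w = a • w) :
    (scalar n a - T).adjugate *ᵥ w = q.eval a • w := by
  -- for `t ≠ a` the factor `t - a` by which `t - T` scales `w` cancels; `t = a` is the limit case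
  have key (t : 𝕜) (ht : t ≠ a) : (scalar n t - T).adjugate *ᵥ w = q.eval t • w := by
    have h1 : (scalar n t - T) *ᵥ w = (t - a) • w := by
      rw [sub_mulVec, hw, scalar_mulVec, sub_smul]
    have h2 : (scalar n t - T).adjugate *ᵥ ((scalar n t - T) *ᵥ w) = T.charpoly.eval t • w := by
      rw [mulVec_mulVec, adjugate_mul, eval_charpoly, smul_mulVec, one_mulVec]
    rw [h1, mulVec_smul, hT, eval_mul, eval_sub, eval_X, eval_C, mul_smul] at h2
    exact smul_right_injective _ (sub_ne_zero.2 ht) h2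
  have hcont : Continuous fun t : 𝕜 => (scalar n t - T).adjugate *ᵥ w := by
    simp only [scalar_apply, ← smul_one_eq_diagonal]
    fun_prop
  refine tendsto_nhds_unique (l := 𝓝[≠] a)
    (hcont.continuousAt.tendsto.mono_left nhdsWithin_le_nhds) ?_
  refine ((q.continuous.smul continuous_const).continuousAt.tendsto.mono_left
    nhdsWithin_le_nhds).congr' ?_
  filter_upwards [self_mem_nhdsWithin] with t ht using (key t ht).symm

theorem tendsto_adjugate_mulVec {𝕜 : Type*} [NontriviallyNormedField 𝕜]
    {B : ℕ → Matrix n n 𝕜} {T : Matrix n n 𝕜} (hB : Tendsto B atTop (𝓝 T))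
    {μ : ℕ → 𝕜} {a : 𝕜} (hμ : Tendsto μ atTop (𝓝 a)) {q : 𝕜[X]}
    (hT : T.charpoly = (X - C a) * q) {w : n → 𝕜} (hw : T *ᵥ w = a • w) :
    Tendsto (fun k => (scalar n (μ k) - B k).adjugate *ᵥ w) atTop (𝓝 (q.eval a • w)) := by
  have hcont : Continuous fun p : 𝕜 × Matrix n n 𝕜 => (scalar n p.1 - p.2).adjugate *ᵥ w := by
    simp only [scalar_apply, ← smul_one_eq_diagonal]
    fun_prop
  have h := (hcont.tendsto (a, T)).comp (hμ.prodMk_nhds hB)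
  rwa [adjugate_mulVec_of_mulVec_eq_smul hT hw] at h

theorem exists_bound_roots_charpoly {A : ℕ → Matrix n n ℂ} {A₀ : Matrix n n ℂ}
    (hA : Tendsto A atTop (𝓝 A₀)) : ∃ R, ∀ k, ∀ z ∈ (A k).charpoly.roots, ‖z‖ ≤ R := by
  cases isEmpty_or_nonempty n
  · exact ⟨0, fun k z hz => by simp at hz⟩
  let := Matrix.linftyOpNormedRing (n := n) (α := ℂ)
  let := Matrix.linftyOpNormedAlgebra (n := n) (R := ℂ) (α := ℂ)
  obtain ⟨R, hR⟩ := hA.norm.bddAbove_range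
  refine ⟨R, fun k z hz => ?_⟩
  have : z ∈ spectrum ℂ (A k) := mem_spectrum_iff_isRoot_charpoly.2 (isRoot_of_mem_roots hz)
  exact (spectrum.norm_le_norm_of_mem this).trans (hR ⟨k, rfl⟩)

theorem eval_charpoly_eq_prod {m : ℕ} {A : Matrix n n ℂ} {ρ : Fin m → ℂ}
    (hρ : Finset.univ.val.map ρ = A.charpoly.roots) (z : ℂ) :
    A.charpoly.eval z = ∏ i, (z - ρ i) := by
  rw [(IsAlgClosed.splits A.charpoly).eq_prod_roots_of_monic A.charpoly_monic, ← hρ,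
    Multiset.map_map, eval_multiset_prod, Multiset.map_map]
  simp [Finset.prod_eq_multiset_prod]

theorem eventually_rel_roots_charpoly {A : ℕ → Matrix n n ℂ} {A₀ : Matrix n n ℂ}
    (hA : Tendsto A atTop (𝓝 A₀)) {ε : ℝ} (hε : 0 < ε) :
    ∀ᶠ k in atTop,
      Multiset.Rel (fun x y => ‖x - y‖ < ε) (A k).charpoly.roots A₀.charpoly.roots := by
  -- otherwise a subsequence of root tuples admits no such matching, yet a further subsequence
  -- converges to a tuple enumerating the roots of `A₀`
  by_contra h
  obtain ⟨φ, hφ, hbad⟩ := extraction_of_frequently_atTop (not_eventually.1 h)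
  have hcard (M : Matrix n n ℂ) : Multiset.card M.charpoly.roots = Fintype.card n := by
    rw [IsAlgClosed.card_roots_eq_natDegree, charpoly_natDegree_eq_dim]
  choose ρ hρ using fun k => Multiset.exists_map_univ_val_eq (hcard (A (φ k)))
  obtain ⟨R, hR⟩ := exists_bound_roots_charpoly hA
  have hbdd : Bornology.IsBounded (Set.range ρ) := by
    refine isBounded_iff_forall_norm_le.2 ⟨max R 0, ?_⟩
    rintro _ ⟨k, rfl⟩
    refine (pi_norm_le_iff_of_nonneg (le_max_right _ _)).2 fun i => le_max_of_le_left ?_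
    exact hR _ _ (hρ k ▸ Multiset.mem_map_of_mem _ (Finset.mem_univ_val i))
  obtain ⟨ζ, -, ψ, hψ, hlim⟩ := tendsto_subseq_of_bounded hbdd (fun k => Set.mem_range_self k)
  have heval (z : ℂ) : A₀.charpoly.eval z = ∏ i, (z - ζ i) := by
    refine tendsto_nhds_unique ?_ ((tendsto_finsetProd _ fun i _ =>
      tendsto_const_nhds.sub (tendsto_pi_nhds.1 hlim i)).congr fun k =>
        (eval_charpoly_eq_prod (hρ (ψ k)) z).symm)
    simp only [eval_charpoly]
    exact ((continuous_const.sub continuous_id).matrix_det.tendsto A₀).comp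
      (hA.comp (hφ.comp hψ).tendsto_atTop)
  have hroots : Finset.univ.val.map ζ = A₀.charpoly.roots := by
    have : A₀.charpoly = ((Finset.univ.val.map ζ).map fun a => X - C a).prod := by
      refine Polynomial.funext fun z => ?_
      rw [heval, eval_multiset_prod, Multiset.map_map, Multiset.map_map]
      simp [Finset.prod_eq_multiset_prod]
    rw [this, roots_multiset_prod_X_sub_C]
  have hclose : ∀ᶠ k in atTop, ∀ i, ‖ρ (ψ k) i - ζ i‖ < ε :=
    eventually_all.2 fun i => by
      simpa [dist_eq_norm] using (tendsto_pi_nhds.1 hlim i).eventually (Metric.ball_mem_nhds _ hε)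
  obtain ⟨k, hk⟩ := hclose.exists
  apply hbad (ψ k)
  rw [← hρ, ← hroots, Multiset.rel_map]
  exact Multiset.rel_refl_of_refl_on fun i _ => hk i

def HasDominantEigenvalue (M : Matrix n n ℝ) (μ : ℝ) : Prop :=
  ∃ s : Multiset ℂ, M.charpoly.aroots ℂ = (μ : ℂ) ::ₘ s ∧ ∀ z ∈ s, ‖z‖ < |μ|

theorem eventually_aroots_charpoly_eq_cons {B : ℕ → Matrix n n ℝ} {T : Matrix n n ℝ}
    (hB : Tendsto B atTop (𝓝 T)) {a : ℝ} {m : ℕ}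
    (hT : T.charpoly.aroots ℂ = (a : ℂ) ::ₘ Multiset.replicate m 0) {ε : ℝ} (hε : 0 < ε) :
    ∀ᶠ k in atTop, ∃ z s, (B k).charpoly.aroots ℂ = z ::ₘ s ∧ ‖z - a‖ < ε ∧ ∀ x ∈ s, ‖x‖ < ε := by
  have hmap (M : Matrix n n ℝ) : (M.map (algebraMap ℝ ℂ)).charpoly.roots = M.charpoly.aroots ℂ := by
    rw [charpoly_map]
  have hBc : Tendsto (fun k => (B k).map (algebraMap ℝ ℂ)) atTop (𝓝 (T.map (algebraMap ℝ ℂ))) :=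
    ((continuous_id.matrix_map (continuous_algebraMap ℝ ℂ)).tendsto T).comp hB
  filter_upwards [eventually_rel_roots_charpoly hBc hε] with k hk
  rw [hmap, hmap, hT, Multiset.rel_cons_right] at hk
  simp only [Multiset.rel_replicate_right] at hk
  obtain ⟨z, s, hz, ⟨-, hs⟩, heq⟩ := hk
  exact ⟨z, s, heq, hz, fun x hx => by simpa using hs x hx⟩

theorem exists_tendsto_hasDominantEigenvalue {B : ℕ → Matrix n n ℝ} {T : Matrix n n ℝ}
    (hB : Tendsto B atTop (𝓝 T)) {a : ℝ} (ha : a ≠ 0) {m : ℕ}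
    (hT : T.charpoly.aroots ℂ = (a : ℂ) ::ₘ Multiset.replicate m 0) :
    ∃ μ : ℕ → ℝ, Tendsto μ atTop (𝓝 a) ∧ ∀ᶠ k in atTop, HasDominantEigenvalue (B k) (μ k) := by
  set r := |a| / 2 with hr
  have hr0 : 0 < r := by positivity
  obtain ⟨N, hN⟩ := eventually_atTop.1 (eventually_aroots_charpoly_eq_cons hB hT hr0)
  choose! z s hzs using hN
  -- since `2 r = |a|`, no root is both `r`-close to `a` and of norm `< r`
  have huniq {k : ℕ} (hk : N ≤ k) {y : ℂ} (hy : y ∈ (B k).charpoly.aroots ℂ)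
      (hya : ‖y - a‖ < r) : y = z k := by
    rw [(hzs k hk).1, Multiset.mem_cons] at hy
    refine hy.resolve_right fun hys => ?_
    have := norm_sub_norm_le (a : ℂ) y
    rw [norm_sub_rev, Complex.norm_real, Real.norm_eq_abs] at this
    linarith [(hzs k hk).2.2 y hys]
  have hreal {k : ℕ} (hk : N ≤ k) : ((z k).re : ℂ) = z k := by
    refine Complex.conj_eq_iff_re.1 (huniq hk (Polynomial.conj_mem_aroots ?_) ?_)
    · exact (hzs k hk).1 ▸ Multiset.mem_cons_self _ _
    · rw [← Complex.conj_ofReal, ← map_sub, Complex.norm_conj]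
      exact (hzs k hk).2.1
  have hlim : Tendsto z atTop (𝓝 a) := by
    refine Metric.tendsto_nhds.2 fun ε hε => ?_
    filter_upwards [eventually_ge_atTop N,
      eventually_aroots_charpoly_eq_cons hB hT (lt_min hε hr0)] with k hk hnear
    obtain ⟨y, s', hy, hya, -⟩ := hnear
    have hyz := huniq hk (hy ▸ Multiset.mem_cons_self _ _) (hya.trans_le (min_le_right _ _))
    rw [dist_eq_norm, ← hyz]
    exact hya.trans_le (min_le_left _ _)
  have hre : Tendsto (Complex.re ∘ z) atTop (𝓝 a) := by
    simpa using (Complex.continuous_re.tendsto (a : ℂ)).comp hlim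
  refine ⟨fun k => (z k).re, hre, ?_⟩
  filter_upwards [eventually_ge_atTop N] with k hk
  refine ⟨s k, by rw [hreal hk]; exact (hzs k hk).1, fun x hx => ?_⟩
  have h1 : |(z k).re| = ‖z k‖ := by
    conv_rhs => rw [← hreal hk, Complex.norm_real, Real.norm_eq_abs]
  have := norm_sub_norm_le (a : ℂ) (z k)
  rw [norm_sub_rev, Complex.norm_real, Real.norm_eq_abs] at this
  linarith [(hzs k hk).2.2 x hx, (hzs k hk).2.1]

namespace HasDominantEigenvalue

variable {M : Matrix n n ℝ} {μ : ℝ}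

theorem of_smul {c : ℝ} (hc : c ≠ 0) (h : HasDominantEigenvalue (c • M) μ) :
    HasDominantEigenvalue M (μ / c) := by
  obtain ⟨s, hs, hlt⟩ := h
  refine ⟨s.map ((c : ℂ)⁻¹ * ·), ?_, ?_⟩
  · have := aroots_charpoly_smul (c • M) (inv_ne_zero hc)
    rw [smul_smul, inv_mul_cancel₀ hc, one_smul] at this
    rw [this, hs, Multiset.map_cons]
    push_cast
    ring_nf
  · simp only [Multiset.forall_mem_map_iff, norm_mul, norm_inv, Complex.norm_real,
      Real.norm_eq_abs, div_eq_inv_mul, abs_mul, abs_inv]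
    exact fun z hz => mul_lt_mul_of_pos_left (hlt z hz) (inv_pos.2 (abs_pos.2 hc))

theorem isRoot (h : HasDominantEigenvalue M μ) : M.charpoly.IsRoot μ := by
  obtain ⟨s, hs, -⟩ := h
  have := (mem_aroots.1 (hs ▸ Multiset.mem_cons_self (μ : ℂ) s)).2
  rw [← Complex.coe_algebraMap, aeval_algebraMap_apply] at this
  simpa using this

theorem count_aroots (h : HasDominantEigenvalue M μ) :
    (M.charpoly.aroots ℂ).count (μ : ℂ) = 1 := by
  obtain ⟨s, hs, hlt⟩ := h
  rw [hs, Multiset.count_cons_self, Multiset.count_eq_zero.2 fun hμ => ?_]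
  simpa using hlt _ hμ

theorem exists_eigMods_eq_cons {d : ℕ} {M : Md d} (h : HasDominantEigenvalue M μ) :
    ∃ s : Multiset ℝ, eigMods M = |μ| ::ₘ s ∧ ∀ r ∈ s, r < |μ| := by
  obtain ⟨s, hs, hlt⟩ := h
  refine ⟨s.map (‖·‖), ?_, Multiset.forall_mem_map_iff.2 hlt⟩
  rw [eigMods_eq_map_aroots, hs, Multiset.map_cons, Complex.norm_real, Real.norm_eq_abs]

theorem le_of_mem_eigMods {d : ℕ} {M : Md d} (h : HasDominantEigenvalue M μ) :
    ∀ r ∈ eigMods M, r ≤ |μ| := by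
  obtain ⟨s, hs, hlt⟩ := h.exists_eigMods_eq_cons
  intro r hr
  rcases Multiset.mem_cons.1 (hs ▸ hr) with rfl | hr
  exacts [le_rfl, (hlt r hr).le]

theorem isProximal {d : ℕ} {M : Md d} (h : HasDominantEigenvalue M μ) : IsProximal M := by
  obtain ⟨s, hs, hlt⟩ := h.exists_eigMods_eq_cons
  refine ⟨|μ|, hs ▸ Multiset.mem_cons_self _ _, ?_, h.le_of_mem_eigMods⟩
  rw [hs, Multiset.count_cons_self, Multiset.count_eq_zero.2 fun hμ => (hlt _ hμ).false]

theorem isTopEigenline_span {d : ℕ} {M : Md d} (h : HasDominantEigenvalue M μ) {v : Vd d}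
    (hv : v ≠ 0) (hMv : M *ᵥ v = μ • v) : IsTopEigenline M (ℝ ∙ v) := by
  refine ⟨μ, h.le_of_mem_eigMods, ?_, finrank_span_singleton hv⟩
  have hmem : v ∈ Module.End.eigenspace (toLin' M) μ :=
    Module.End.mem_eigenspace_iff.2 (by rw [toLin'_apply, hMv])
  refine Submodule.eq_of_le_of_finrank_le ((Submodule.span_singleton_le_iff_mem _ _).2 hmem) ?_
  calc finrank ℝ (Module.End.eigenspace (toLin' M) μ)
      ≤ (toLin' M).charpoly.rootMultiplicity μ := LinearMap.finrank_eigenspace_le _ _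
    _ = M.charpoly.rootMultiplicity μ := by rw [charpoly_toLin']
    _ ≤ (M.charpoly.map (algebraMap ℝ ℂ)).rootMultiplicity (μ : ℂ) :=
      le_rootMultiplicity_map (map_monic_ne_zero M.charpoly_monic) μ
    _ = 1 := by rw [← count_roots, ← aroots_def, h.count_aroots]
    _ = finrank ℝ (ℝ ∙ v) := (finrank_span_singleton hv).symm

end HasDominantEigenvalue

end Matrix

theorem stmt2_general {d : ℕ} (g : ℕ → Md d) (T : Md d) (hT : T ≠ 0)
    (hrank : T.rank = 1)
    (hcompl : IsCompl (LinearMap.range (Matrix.toLin' T)) (LinearMap.ker (Matrix.toLin' T)))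
    (c : ℕ → ℝ) (hconv : Tendsto (fun n => c n • g n) atTop (nhds T)) :
    ∃ N : ℕ, (∀ n ≥ N, IsProximal (g n)) ∧
      ∃ v : ℕ → Vd d, (∀ n ≥ N, v n ≠ 0 ∧ IsTopEigenline (g n) (ℝ ∙ v n)) ∧
        ∃ w : Vd d, w ≠ 0 ∧ w ∈ LinearMap.range (Matrix.toLin' T) ∧
          Tendsto v atTop (nhds w) := by
  obtain ⟨w, a, hw, ha, hspan, hTw, hchar⟩ := exists_eigenvector_of_rank_eq_one hrank hcompl
  obtain ⟨μ, hμ, hdom⟩ := exists_tendsto_hasDominantEigenvalue hconv ha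
    (by rw [hchar, aroots_X_sub_C_mul_X_pow, Complex.coe_algebraMap])
  have hv := tendsto_adjugate_mulVec hconv hμ hchar hTw
  have hv0 : (X ^ (Fintype.card (Fin d) - 1)).eval a • w ≠ 0 := by
    simpa [ha] using hw
  obtain ⟨N, hN⟩ :=
    eventually_atTop.1 (hdom.and ((hv.eventually_ne hv0).and (hconv.eventually_ne hT)))
  have hc {n : ℕ} (hn : N ≤ n) : c n ≠ 0 := fun h0 => (hN n hn).2.2 (by simp [h0])
  have hgdom {n : ℕ} (hn : N ≤ n) : HasDominantEigenvalue (g n) (μ n / c n) :=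
    (hN n hn).1.of_smul (hc hn)
  refine ⟨N, fun n hn => (hgdom hn).isProximal, _,
    fun n hn => ⟨(hN n hn).2.1, (hgdom hn).isTopEigenline_span (hN n hn).2.1 ?_⟩,
    _, hv0, ?_, hv⟩
  · have := mulVec_adjugate_mulVec_of_isRoot (hN n hn).1.isRoot w
    rw [smul_mulVec] at this
    rw [div_eq_inv_mul, mul_smul, ← this, smul_smul, inv_mul_cancel₀ (hc hn), one_smul]
  · rw [hspan]
    exact Submodule.smul_mem _ _ (Submodule.mem_span_singleton_self w)

/-- if invertible matrices `g n` converge in `P(End(ℝ^d))` to a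
rank-one `T` with `image T ⊕ ker T = ℝ^d`, then the `g n` are eventually proximal
and their attracting eigenlines converge to `image T`. -/
theorem stmt2 {d : ℕ} (g : ℕ → Md d) (hinv : ∀ n, IsUnit (g n)) (T : Md d) (hT : T ≠ 0)
    (hrank : T.rank = 1)
    (hcompl : IsCompl (LinearMap.range (Matrix.toLin' T)) (LinearMap.ker (Matrix.toLin' T)))
    (c : ℕ → ℝ) (hconv : Tendsto (fun n => c n • g n) atTop (nhds T)) :
    ∃ N : ℕ, (∀ n ≥ N, IsProximal (g n)) ∧
      ∃ v : ℕ → Vd d, (∀ n ≥ N, v n ≠ 0 ∧ IsTopEigenline (g n) (ℝ ∙ v n)) ∧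
        ∃ w : Vd d, w ≠ 0 ∧ w ∈ LinearMap.range (Matrix.toLin' T) ∧
          Tendsto v atTop (nhds w) :=
  stmt2_general g T hT hrank hcompl c hconv
end
end

section
/- Let Ω ⊂ P(ℝ^d) be a properly convex domain and Λ ≤ PGL(d,ℝ) a subgroup preserving Ω. If S and T lie in the closure of Λ in P(End(ℝ^d)) and image(T) is not contained in ker(S), then the composition S∘T also lies in the closure of Λ in P(End(ℝ^d)). -/
open Matrix Topology Filter
open scoped MatrixGroups

noncomputable section

theorem Matrix.range_toLin'_le_ker_toLin'_iff {R : Type*} {l m n : Type*} [CommSemiring R]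
    [Fintype m] [DecidableEq m] [Fintype n] [DecidableEq n] (S : Matrix l m R)
    (T : Matrix m n R) :
    LinearMap.range (Matrix.toLin' T) ≤ LinearMap.ker (Matrix.toLin' S) ↔ S * T = 0 := by
  rw [LinearMap.range_le_ker_iff, ← Matrix.toLin'_mul, LinearEquiv.map_eq_zero_iff]

theorem InEndClosure.mul {d : ℕ} {Λ : Set (Md d)} (hΛmul : ∀ g ∈ Λ, ∀ h ∈ Λ, g * h ∈ Λ)
    {S T : Md d} (hS : InEndClosure Λ S) (hT : InEndClosure Λ T) (hST : S * T ≠ 0) :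
    InEndClosure Λ (S * T) := by
  obtain ⟨-, f, b, hf, hfS⟩ := hS
  obtain ⟨-, g, c, hg, hgT⟩ := hT
  refine ⟨hST, fun n => f n * g n, fun n => b n * c n, fun n => hΛmul _ (hf n) _ (hg n), ?_⟩
  simpa only [smul_mul_smul_comm] using hfS.mul hgT

theorem stmt3_general {d : ℕ} (Λ : Set (Md d))
    (hΛmul : ∀ g ∈ Λ, ∀ h ∈ Λ, g * h ∈ Λ)
    (S T : Md d) (hS : InEndClosure Λ S) (hT : InEndClosure Λ T)
    (h : ¬ (LinearMap.range (Matrix.toLin' T) ≤ LinearMap.ker (Matrix.toLin' S))) :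
    InEndClosure Λ (S * T) :=
  hS.mul hΛmul hT fun hST => h ((Matrix.range_toLin'_le_ker_toLin'_iff S T).2 hST)

/-- the closure of a group `Λ ≤ PGL(d,ℝ)` preserving a properly convex
domain, taken in `P(End(ℝ^d))`, is closed under composition `S ∘ T` whenever
`image T ⊄ ker S`. -/
theorem stmt3 {d : ℕ} (C : Set (Vd d)) (hC : IsProperCone C) (Λ : Set (Md d))
    (hΛaut : ∀ g ∈ Λ, ConeAut C g) (hΛone : (1 : Md d) ∈ Λ)
    (hΛmul : ∀ g ∈ Λ, ∀ h ∈ Λ, g * h ∈ Λ)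
    (hΛinv : ∀ g ∈ Λ, ∃ h ∈ Λ, ∃ e : ℝ, e ≠ 0 ∧ h * g = e • (1 : Md d))
    (S T : Md d) (hS : InEndClosure Λ S) (hT : InEndClosure Λ T)
    (h : ¬ (LinearMap.range (Matrix.toLin' T) ≤ LinearMap.ker (Matrix.toLin' S))) :
    InEndClosure Λ (S * T) :=
  stmt3_general Λ hΛmul S T hS hT h

end
end

section
/- Let S ⊂ P(ℝ^d) be an open projective simplex of dimension k ≥ 1 equipped with its Hilbert metric H_S, and let g ∈ Aut(S) fix every vertex of S. Then every point of S realizes the minimal translation length of g: H_S(x, gx) = inf_{y ∈ S} H_S(y, gy) for all x ∈ S. -/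
open Matrix Topology Filter
open scoped MatrixGroups

noncomputable section

/-!
In the coordinates `v ↦ h v` the cone `C` is the cone over a coordinate simplex, and an
automorphism fixing the vertices acts diagonally: `g (h a) = h (μ * a)`. The Hilbert distance is
invariant under linear isomorphisms, and on the coordinate cone the two gauges `M(a / μ a)` and
`M(μ a / a)` are the infima of `{t | ∀ i, 1 ≤ t μᵢ}` and `{t | ∀ i, μᵢ ≤ t}`, in which `a` no
longer appears. So the displacement `H(x, g x)` is the same at every point.
-/

section HilbertInvariance

variable {d : ℕ} (e : Vd d ≃L[ℝ] Vd d) (A : Set (Vd d))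

theorem gaugeM_image_continuousLinearEquiv (u v : Vd d) :
    gaugeM (e '' A) (e u) (e v) = gaugeM A u v := by
  have hmem : ∀ t : ℝ, t • e v - e u ∈ closure (e '' A) ↔ t • v - u ∈ closure A := fun t => by
    rw [← e.image_closure, ← map_smul, ← map_sub, e.injective.mem_set_image]
  simp only [gaugeM, hmem]

theorem hilbertDist_image_continuousLinearEquiv (u v : Vd d) :
    hilbertDist (e '' A) (e u) (e v) = hilbertDist A u v := by
  simp only [hilbertDist, gaugeM_image_continuousLinearEquiv]

end HilbertInvariance

theorem LinearMap.apply_eq_apply_mul_of_apply_single {R M ι : Type*} [CommSemiring R]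
    [AddCommMonoid M] [Module R M] [Fintype ι] [DecidableEq ι] (f : M →ₗ[R] M)
    (e : (ι → R) →ₗ[R] M) {s : Set ι} {μ : ι → R}
    (hμ : ∀ i ∈ s, f (e (Pi.single i 1)) = μ i • e (Pi.single i 1))
    {a : ι → R} (ha : ∀ i ∉ s, a i = 0) :
    f (e a) = e (μ * a) := by
  have hsingle : ∀ i, f (e (Pi.single i (a i))) = e (Pi.single i ((μ * a) i)) := by
    intro i
    by_cases hi : i ∈ s
    · have hsmul : ∀ r : R, Pi.single i r = r • (Pi.single i 1 : ι → R) := fun r => by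
        rw [← Pi.single_smul, smul_eq_mul, mul_one]
      rw [hsmul (a i), hsmul ((μ * a) i), map_smul, map_smul, hμ i hi, smul_smul, Pi.mul_apply,
        mul_comm, map_smul]
    · simp [ha i hi]
  calc f (e a) = ∑ i, f (e (Pi.single i (a i))) := by
        conv_lhs => rw [← Finset.univ_sum_single a]
        simp only [map_sum]
    _ = e (μ * a) := by
        simp only [hsingle, ← map_sum, Finset.univ_sum_single]

section FaceCone

variable {d : ℕ}

/-- The cone over the open simplex spanned by the coordinate vectors indexed by `s`. -/
def faceCone (s : Set (Fin d)) [DecidablePred (· ∈ s)] : Set (Vd d) :=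
  Set.univ.pi fun i => if i ∈ s then Set.Ioi 0 else {0}

variable {s : Set (Fin d)} [DecidablePred (· ∈ s)]

theorem closure_faceCone :
    closure (faceCone s) = Set.univ.pi fun i => if i ∈ s then Set.Ici 0 else {0} := by
  simp only [faceCone, closure_pi_set, apply_ite closure, closure_Ioi, closure_singleton]

theorem mem_faceCone_iff {a : Vd d} :
    a ∈ faceCone s ↔ (∀ i ∈ s, 0 < a i) ∧ ∀ i ∉ s, a i = 0 := by
  simp only [faceCone, Set.mem_univ_pi, ← forall_and]
  refine forall_congr' fun i => ?_
  by_cases hi : i ∈ s <;> simp [hi]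

theorem smul_mul_sub_mul_mem_closure_faceCone_iff {a : Vd d} (ha : a ∈ faceCone s)
    (b c : Vd d) (t : ℝ) :
    t • (b * a) - c * a ∈ closure (faceCone s) ↔ ∀ i ∈ s, c i ≤ t * b i := by
  simp only [closure_faceCone, Set.mem_univ_pi]
  refine forall_congr' fun i => ?_
  by_cases hi : i ∈ s
  · simp only [hi, if_true, Set.mem_Ici, Pi.sub_apply, Pi.smul_apply, Pi.mul_apply, smul_eq_mul,
      true_implies]
    rw [← mul_assoc, ← sub_mul, mul_nonneg_iff_of_pos_right ((mem_faceCone_iff.1 ha).1 i hi),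
      sub_nonneg]
  · simp [hi, (mem_faceCone_iff.1 ha).2 i hi]

theorem gaugeM_faceCone_mul_mul {a : Vd d} (ha : a ∈ faceCone s) (c b : Vd d) :
    gaugeM (faceCone s) (c * a) (b * a) = sInf {t : ℝ | 0 < t ∧ ∀ i ∈ s, c i ≤ t * b i} := by
  simp only [gaugeM, smul_mul_sub_mul_mem_closure_faceCone_iff ha]

theorem hilbertDist_faceCone_mul_eq {a a' : Vd d}
    (ha : a ∈ faceCone s) (ha' : a' ∈ faceCone s) (μ : Vd d) :
    hilbertDist (faceCone s) a (μ * a) = hilbertDist (faceCone s) a' (μ * a') := by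
  have h₁ : ∀ x ∈ faceCone s,
      gaugeM (faceCone s) x (μ * x) = sInf {t : ℝ | 0 < t ∧ ∀ i ∈ s, 1 ≤ t * μ i} :=
    fun x hx => by simpa using gaugeM_faceCone_mul_mul hx 1 μ
  have h₂ : ∀ x ∈ faceCone s,
      gaugeM (faceCone s) (μ * x) x = sInf {t : ℝ | 0 < t ∧ ∀ i ∈ s, μ i ≤ t} :=
    fun x hx => by simpa using gaugeM_faceCone_mul_mul hx μ 1
  rw [hilbertDist, hilbertDist, h₁ a ha, h₁ a' ha', h₂ a ha, h₂ a' ha']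

end FaceCone

theorem stmt6_general {d k : ℕ} (h : GL (Fin d) ℝ)
    (C : Set (Vd d))
    (hC : C = (fun v => (↑h : Md d).mulVec v) ''
      {v : Vd d | (∀ i : Fin d, (i : ℕ) ≤ k → 0 < v i) ∧ ∀ i : Fin d, k < (i : ℕ) → v i = 0})
    (g : Md d)
    (hfix : ∀ i : Fin d, (i : ℕ) ≤ k → ∃ μ : ℝ, μ ≠ 0 ∧
      g.mulVec ((↑h : Md d).mulVec (Pi.single i 1)) = μ • (↑h : Md d).mulVec (Pi.single i 1)) :
    ∀ u ∈ C, ∀ w ∈ C, hilbertDist C u (g.mulVec u) ≤ hilbertDist C w (g.mulVec w) := by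
  choose! μ _ hμ using hfix
  set e : Vd d ≃L[ℝ] Vd d :=
    (Matrix.GeneralLinearGroup.toLin h).toLinearEquiv.toContinuousLinearEquiv
  have hCe : C = e '' faceCone {i : Fin d | (i : ℕ) ≤ k} := by
    rw [hC]
    congr 1
    ext v
    simp [mem_faceCone_iff]
  have hge : ∀ a ∈ faceCone {i : Fin d | (i : ℕ) ≤ k}, g.mulVec (e a) = e (μ * a) :=
    fun a ha => g.mulVecLin.apply_eq_apply_mul_of_apply_single e.toLinearMap hμ
      (mem_faceCone_iff.1 ha).2
  subst hCe
  rintro _ ⟨a, ha, rfl⟩ _ ⟨a', ha', rfl⟩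
  rw [hge a ha, hge a' ha', hilbertDist_image_continuousLinearEquiv,
    hilbertDist_image_continuousLinearEquiv, hilbertDist_faceCone_mul_eq ha ha']

/-- if `g` is an automorphism of an open projective `k`-simplex `S`
(`k ≥ 1`) fixing every vertex, then every point of `S` realizes the minimal
translation length of `g` for the Hilbert metric, i.e. `x ↦ H_S(x, gx)` attains its
infimum at every point (equivalently is constant). -/
theorem stmt6 {d k : ℕ} (hk : 1 ≤ k) (hkd : k < d) (h : GL (Fin d) ℝ)
    (C : Set (Vd d))
    (hC : C = (fun v => (↑h : Md d).mulVec v) ''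
      {v : Vd d | (∀ i : Fin d, (i : ℕ) ≤ k → 0 < v i) ∧ ∀ i : Fin d, k < (i : ℕ) → v i = 0})
    (g : Md d) (hg : ConeAut C g)
    (hfix : ∀ i : Fin d, (i : ℕ) ≤ k → ∃ μ : ℝ, μ ≠ 0 ∧
      g.mulVec ((↑h : Md d).mulVec (Pi.single i 1)) = μ • (↑h : Md d).mulVec (Pi.single i 1)) :
    ∀ u ∈ C, ∀ w ∈ C, hilbertDist C u (g.mulVec u) ≤ hilbertDist C w (g.mulVec w) :=
  stmt6_general h C hC g hfix
end
end

section
/- Let Λ ≤ PGL(d,ℝ) act irreducibly on ℝ^d, let T be a nonzero non-invertible endomorphism of ℝ^d arising as a limit of elements of Λ in P(End(ℝ^d)), and let g ∈ Λ be proximal with attracting line ℓ⁺_g. Then there exists φ ∈ Λ with φ·ℓ⁺_g ∉ [ker T], and consequently the conjugates g_n := h_n φ g (h_n φ)^{-1} (for any sequence h_n ∈ Λ converging to T in P(End(ℝ^d))) are proximal with ℓ⁺_{g_n} = h_n φ ℓ⁺_g converging to T(φ ℓ⁺_g). -/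
open Matrix Topology Filter
open scoped MatrixGroups

noncomputable section

namespace Matrix

variable {n R : Type*} [Fintype n] [DecidableEq n] [CommRing R]

theorem charpoly_conj_of_isUnit {A : Matrix n n R} (hA : IsUnit A) (g : Matrix n n R) :
    (A * g * A⁻¹).charpoly = g.charpoly := by
  rw [charpoly_mul_comm, ← mul_assoc, nonsing_inv_mul _ ((isUnit_iff_isUnit_det A).mp hA),
    one_mul]

theorem eigenspace_toLin'_conj_of_isUnit {A : Matrix n n R} (hA : IsUnit A) (g : Matrix n n R)
    (μ : R) :
    Module.End.eigenspace (toLin' (A * g * A⁻¹)) μ =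
      (Module.End.eigenspace (toLin' g) μ).map (toLin' A) := by
  have hdet := (isUnit_iff_isUnit_det A).mp hA
  ext x
  simp only [Submodule.mem_map, Module.End.mem_eigenspace_iff, toLin'_apply]
  constructor
  · intro hx
    refine ⟨A⁻¹ *ᵥ x, ?_, by rw [mulVec_mulVec, mul_nonsing_inv A hdet, one_mulVec]⟩
    rw [mulVec_mulVec, ← nonsing_inv_mul_cancel_left A (g * A⁻¹) hdet, ← mul_assoc A,
      ← mulVec_mulVec, hx, mulVec_smul]
  · rintro ⟨y, hy, rfl⟩
    rw [mulVec_mulVec, nonsing_inv_mul_cancel_right A (A * g) hdet, ← mulVec_mulVec, hy,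
      mulVec_smul]

variable {m : Type*} {Λ : Set (Matrix n n R)}

theorem map_span_image_mulVec_le (hmul : ∀ g ∈ Λ, ∀ h ∈ Λ, g * h ∈ Λ) (v : n → R)
    {g : Matrix n n R} (hg : g ∈ Λ) :
    (Submodule.span R ((· *ᵥ v) '' Λ)).map (toLin' g) ≤
      Submodule.span R ((· *ᵥ v) '' Λ) := by
  rw [Submodule.map_span_le]
  rintro _ ⟨p, hp, rfl⟩
  exact Submodule.subset_span ⟨g * p, hmul g hg p hp, by simp [mulVec_mulVec]⟩

/-- If `T ≠ 0` killed every `φ v` with `φ ∈ Λ`, its kernel would contain the nonzero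
`Λ`-invariant subspace spanned by the orbit `Λ v`. -/
theorem exists_mulVec_mulVec_ne_zero_of_irreducible [Fintype m]
    (hmul : ∀ g ∈ Λ, ∀ h ∈ Λ, g * h ∈ Λ)
    (hirr : ∀ W : Submodule R (n → R), (∀ g ∈ Λ, W.map (toLin' g) ≤ W) →
      W = ⊥ ∨ W = ⊤)
    {T : Matrix m n R} (hT : T ≠ 0) {v : n → R} {g : Matrix n n R} (hg : g ∈ Λ)
    (hgv : g *ᵥ v ≠ 0) : ∃ φ ∈ Λ, T *ᵥ (φ *ᵥ v) ≠ 0 := by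
  by_contra! hker
  have hspan_ne_bot : Submodule.span R ((· *ᵥ v) '' Λ) ≠ ⊥ := by
    rw [Ne, Submodule.span_eq_bot]
    exact fun h => hgv (h _ ⟨g, hg, rfl⟩)
  have hspan_top := (hirr _ fun g hg => map_span_image_mulVec_le hmul v hg).resolve_left
    hspan_ne_bot
  have hspan_le_ker : Submodule.span R ((· *ᵥ v) '' Λ) ≤ LinearMap.ker (toLin' T) := by
    rw [Submodule.span_le]
    rintro _ ⟨p, hp, rfl⟩
    exact hker p hp
  have hT_zero : toLin' T = 0 := LinearMap.ker_eq_top.1 (top_le_iff.1 (hspan_top ▸ hspan_le_ker))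
  exact hT ((map_eq_zero_iff _ toLin'.injective).1 hT_zero)

end Matrix

section Conjugation

variable {d : ℕ} {A g : Md d}

theorem eigMods_conj_of_isUnit (hA : IsUnit A) (g : Md d) :
    eigMods (A * g * A⁻¹) = eigMods g := by
  rw [eigMods, eigMods, charpoly_conj_of_isUnit hA]

theorem IsProximal.conj (hA : IsUnit A) (hg : IsProximal g) : IsProximal (A * g * A⁻¹) := by
  rwa [IsProximal, eigMods_conj_of_isUnit hA]

theorem IsTopEigenline.conj (hA : IsUnit A) {ℓ : Submodule ℝ (Vd d)}
    (hl : IsTopEigenline g ℓ) :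
    IsTopEigenline (A * g * A⁻¹) (ℓ.map (toLin' A)) := by
  obtain ⟨μ, hμ, rfl, hrank⟩ := hl
  refine ⟨μ, eigMods_conj_of_isUnit hA g ▸ hμ,
    (eigenspace_toLin'_conj_of_isUnit hA g μ).symm, ?_⟩
  have hinj : Function.Injective (toLin' A) := mulVec_injective_of_isUnit hA
  rw [← (Submodule.equivMapOfInjective _ hinj _).finrank_eq, hrank]

end Conjugation

theorem stmt10_general {d : ℕ} (Λ : Set (Md d)) (hunit : ∀ g ∈ Λ, IsUnit g)
    (hmul : ∀ g ∈ Λ, ∀ h ∈ Λ, g * h ∈ Λ)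
    (hirr : ∀ W : Submodule ℝ (Vd d), (∀ g ∈ Λ, W.map (Matrix.toLin' g) ≤ W) → W = ⊥ ∨ W = ⊤)
    (T : Md d) (hTcl : InEndClosure Λ T)
    (g : Md d) (hgΛ : g ∈ Λ) (hgprox : IsProximal g) (v : Vd d) (hv : v ≠ 0)
    (hl : IsTopEigenline g (ℝ ∙ v)) :
    ∃ φ ∈ Λ, T.mulVec (φ.mulVec v) ≠ 0 ∧
      ∀ (hn : ℕ → Md d) (c : ℕ → ℝ), (∀ n, hn n ∈ Λ) →
        Tendsto (fun n => c n • hn n) atTop (nhds T) →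
        (∀ n, IsProximal (hn n * φ * g * (hn n * φ)⁻¹) ∧
          IsTopEigenline (hn n * φ * g * (hn n * φ)⁻¹) (ℝ ∙ ((hn n * φ).mulVec v))) ∧
        ∃ c' : ℕ → ℝ, Tendsto (fun n => c' n • (hn n * φ).mulVec v) atTop
          (nhds (T.mulVec (φ.mulVec v))) := by
  have hgv : g *ᵥ v ≠ 0 := fun h =>
    hv (mulVec_injective_of_isUnit (hunit g hgΛ) (h.trans (mulVec_zero g).symm))
  obtain ⟨φ, hφΛ, hφ⟩ :=
    exists_mulVec_mulVec_ne_zero_of_irreducible hmul hirr hTcl.1 hgΛ hgv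
  refine ⟨φ, hφΛ, hφ, fun hn c hnΛ hlim => ⟨fun n => ?_, c, ?_⟩⟩
  · have hA := hunit _ (hmul _ (hnΛ n) φ hφΛ)
    refine ⟨hgprox.conj hA, ?_⟩
    simpa only [Submodule.map_span, Set.image_singleton, toLin'_apply] using hl.conj hA
  · simp_rw [← mulVec_mulVec, ← smul_mulVec]
    exact ((continuous_id.matrix_mulVec continuous_const).tendsto T).comp hlim

/-- for an irreducible `Λ`, a singular limit `T` of `Λ` in
`P(End(ℝ^d))` and a proximal `g ∈ Λ` with eigenline `[v]`, there is `φ ∈ Λ` with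
`φ·[v] ∉ [ker T]`; consequently, for any sequence `h n ∈ Λ` converging to `T`, the
conjugates `(h n · φ) g (h n · φ)⁻¹` are proximal with attracting lines
`(h n · φ)·[v]` converging to `T(φ·[v])`. -/
theorem stmt10 {d : ℕ} (Λ : Set (Md d)) (hunit : ∀ g ∈ Λ, IsUnit g)
    (hmul : ∀ g ∈ Λ, ∀ h ∈ Λ, g * h ∈ Λ)
    (hirr : ∀ W : Submodule ℝ (Vd d), (∀ g ∈ Λ, W.map (Matrix.toLin' g) ≤ W) → W = ⊥ ∨ W = ⊤)
    (T : Md d) (hTcl : InEndClosure Λ T) (hTni : ¬ IsUnit T)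
    (g : Md d) (hgΛ : g ∈ Λ) (hgprox : IsProximal g) (v : Vd d) (hv : v ≠ 0)
    (hl : IsTopEigenline g (ℝ ∙ v)) :
    ∃ φ ∈ Λ, T.mulVec (φ.mulVec v) ≠ 0 ∧
      ∀ (hn : ℕ → Md d) (c : ℕ → ℝ), (∀ n, hn n ∈ Λ) →
        Tendsto (fun n => c n • hn n) atTop (nhds T) →
        (∀ n, IsProximal (hn n * φ * g * (hn n * φ)⁻¹) ∧
          IsTopEigenline (hn n * φ * g * (hn n * φ)⁻¹) (ℝ ∙ ((hn n * φ).mulVec v))) ∧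
        ∃ c' : ℕ → ℝ, Tendsto (fun n => c' n • (hn n * φ).mulVec v) atTop
          (nhds (T.mulVec (φ.mulVec v))) :=
  stmt10_general Λ hunit hmul hirr T hTcl g hgΛ hgprox v hv hl

end
end

section
/- Let Ω ⊂ P(ℝ^d) be a properly convex domain and γ ∈ Aut(Ω) a bi-proximal element such that the projectivized kernel of T_γ := lim γⁿ (in P(End(ℝ^d))) meets the closure of Ω only in the point ℓ⁻_γ. Then γ has 'north–south dynamics': for all neighborhoods A of ℓ⁺_γ and B of ℓ⁻_γ in closure(Ω), there exists N such that for all n ≥ N, γⁿ(closure(Ω) \ B) ⊂ A and γ^{-n}(closure(Ω) \ A) ⊂ B. -/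
open Matrix Topology Filter
open scoped MatrixGroups

noncomputable section

/-
Let `T = lim c_n γ^n` and let `μ` be the eigenvalue of `γ` on `ℓ⁺ = [vP]`. If `T vP = 0`,
the kernel hypothesis puts `ℓ⁺` on `ℓ⁻`, which makes all eigenvalue moduli of `γ` equal and
contradicts proximality. So `T vP ≠ 0`, hence `c_n μ^n` converges to a nonzero limit,
`γ T = μ T`, and `T` has image `ℓ⁺`. On the compact set of unit vectors of `closure C` outside
the cone over a neighbourhood of `ℓ⁻`, `T` has no zero, so `c_n γ^n` converges uniformly there
to vectors in the cone over any given neighbourhood of `ℓ⁺`. The statement for `γ⁻¹` follows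
from the one for `γ` applied to `γ^{-n} x`.
-/

section AffineCone

variable {K V : Type*} [DivisionRing K] [AddCommGroup V] [Module K V]

def affineCone (U : Set (Projectivization K V)) : Set V :=
  {w | ∃ h : w ≠ 0, Projectivization.mk K w h ∈ U}

lemma mem_affineCone_of_smul_mem {U : Set (Projectivization K V)} {a : K} {w : V}
    (h : a • w ∈ affineCone U) : w ∈ affineCone U := by
  obtain ⟨haw, hmem⟩ := h
  have hw : w ≠ 0 := right_ne_zero_of_smul haw
  refine ⟨hw, ?_⟩
  rwa [(Projectivization.mk_eq_mk_iff' K _ _ haw hw).2 ⟨a, rfl⟩] at hmem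

lemma smul_mem_affineCone {U : Set (Projectivization K V)} {a : K} (ha : a ≠ 0) {w : V}
    (hw : w ∈ affineCone U) : a • w ∈ affineCone U :=
  mem_affineCone_of_smul_mem (a := a⁻¹) (by rwa [inv_smul_smul₀ ha])

lemma isQuotientMap_projectivization_mk [TopologicalSpace V] :
    IsQuotientMap (fun v : {v : V // v ≠ 0} => Projectivization.mk K v.1 v.2) :=
  isQuotientMap_quotient_mk'

lemma isOpen_affineCone [TopologicalSpace V] [T1Space V] {U : Set (Projectivization K V)}
    (hU : IsOpen U) : IsOpen (affineCone U) := by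
  have h := isOpen_ne.isOpenMap_subtype_val _
    (hU.preimage isQuotientMap_projectivization_mk.continuous)
  convert h using 1
  ext w
  simp [affineCone]

end AffineCone

lemma exists_forall_mapsTo_of_eventually {X : Type*} {S A B UA UB : Set X}
    {f g : ℕ → X → X} (hfg : ∀ n x, f n (g n x) = x) (hf : ∀ n, Set.MapsTo (f n) S S)
    (hg : ∀ n, Set.MapsTo (g n) S S) (hA : UA ∩ S ⊆ A) (hB : UB ∩ S ⊆ B)
    (h : ∀ᶠ n in atTop, ∀ x ∈ S, x ∉ UB → f n x ∈ UA) :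
    ∃ N, ∀ n ≥ N, (∀ x ∈ S \ B, f n x ∈ A) ∧ (∀ x ∈ S \ A, g n x ∈ B) := by
  obtain ⟨N, hN⟩ := eventually_atTop.1 h
  refine ⟨N, fun n hn => ⟨fun x hx => ?_, fun x hx => ?_⟩⟩
  · exact hA ⟨hN n hn x hx.1 fun hxU => hx.2 (hB ⟨hxU, hx.1⟩), hf n hx.1⟩
  · by_contra hgx
    refine hx.2 (hA ⟨?_, hx.1⟩)
    rw [← hfg n x]
    exact hN n hn _ (hg n hx.1) fun hU => hgx (hB ⟨hU, hg n hx.1⟩)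

lemma mul_eq_smul_of_tendsto_smul_pow {A : Type*} [Ring A] [Algebra ℝ A] [TopologicalSpace A]
    [ContinuousMul A] [ContinuousSMul ℝ A] [T2Space A] {g T : A} {c : ℕ → ℝ} {μ t : ℝ}
    (hconv : Tendsto (fun n => c n • g ^ n) atTop (𝓝 T))
    (ha : Tendsto (fun n => c n * μ ^ n) atTop (𝓝 t)) (ht : t ≠ 0) : g * T = μ • T := by
  have hshift : Tendsto (fun n => c (n + 1) * μ ^ (n + 1)) atTop (𝓝 t) :=
    ha.comp (tendsto_add_atTop_nat 1)
  have hratio :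
      Tendsto (fun n => μ * (c n * μ ^ n) / (c (n + 1) * μ ^ (n + 1))) atTop (𝓝 μ) := by
    have h := (ha.const_mul μ).div hshift ht
    rwa [mul_div_cancel_right₀ _ ht] at h
  refine tendsto_nhds_unique ((hconv.const_mul g).congr' ?_)
    (hratio.smul (hconv.comp (tendsto_add_atTop_nat 1)))
  filter_upwards [hshift.eventually_ne ht] with n hn
  rw [Function.comp_apply, smul_smul, mul_smul_comm, ← pow_succ']
  congr 1
  rw [eq_comm, div_mul_eq_mul_div, div_eq_iff hn]
  ring

section Projective

variable {d : ℕ}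

lemma mk_mem_projSet_iff {K : Set (Vd d)} (hK : ∀ v ∈ K, ∀ t : ℝ, 0 < t → t • v ∈ K)
    {v : Vd d} (hv : v ≠ 0) : Projectivization.mk ℝ v hv ∈ projSet K ↔ v ∈ K ∨ -v ∈ K := by
  constructor
  · rintro ⟨w, hw, hwK, heq⟩
    obtain ⟨a, rfl⟩ := (Projectivization.mk_eq_mk_iff' ℝ _ _ hv hw).1 heq
    rcases (left_ne_zero_of_smul hv).lt_or_gt with ha | ha
    · exact Or.inr (by simpa [neg_smul] using hK w hwK (-a) (neg_pos.2 ha))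
    · exact Or.inl (hK w hwK a ha)
  · rintro (h | h)
    · exact ⟨v, hv, h, rfl⟩
    · refine ⟨-v, neg_ne_zero.2 hv, h, (Projectivization.mk_eq_mk_iff' ℝ _ _ hv _).2 ⟨-1, ?_⟩⟩
      simp

lemma isClosed_projSet {K : Set (Vd d)} (hK : IsClosed K)
    (hcone : ∀ v ∈ K, ∀ t : ℝ, 0 < t → t • v ∈ K) : IsClosed (projSet K) := by
  rw [← isQuotientMap_projectivization_mk.isClosed_preimage]
  have hpre : (fun v : {v : Vd d // v ≠ 0} => Projectivization.mk ℝ v.1 v.2) ⁻¹' projSet K =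
      {v | v.1 ∈ K ∨ -v.1 ∈ K} := by
    ext ⟨v, hv⟩
    exact mk_mem_projSet_iff hcone hv
  rw [hpre]
  exact (hK.preimage continuous_subtype_val).union (hK.preimage continuous_subtype_val.neg)

lemma smul_mem_closure_of_smul_mem {C : Set (Vd d)}
    (hC : ∀ v ∈ C, ∀ t : ℝ, 0 < t → t • v ∈ C) :
    ∀ v ∈ closure C, ∀ t : ℝ, 0 < t → t • v ∈ closure C := fun _ hv t ht =>
  map_mem_closure (continuous_const_smul t) hv fun u hu => hC u hu t ht

lemma closure_projSet {C : Set (Vd d)} (hC : ∀ v ∈ C, ∀ t : ℝ, 0 < t → t • v ∈ C) :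
    closure (projSet C) = projSet (closure C) := by
  refine (closure_minimal ?_ (isClosed_projSet isClosed_closure
    (smul_mem_closure_of_smul_mem hC))).antisymm ?_
  · rintro _ ⟨v, hv, hvC, rfl⟩
    exact ⟨v, hv, subset_closure hvC, rfl⟩
  · rintro _ ⟨v, hv, hvC, rfl⟩
    have hsub : (⟨v, hv⟩ : {v : Vd d // v ≠ 0}) ∈ closure (Subtype.val ⁻¹' C) := by
      rw [closure_subtype]
      refine closure_mono ?_ (isOpen_ne.inter_closure ⟨hv, hvC⟩)
      exact fun w hw => ⟨⟨w, hw.1⟩, hw.2, rfl⟩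
    exact map_mem_closure isQuotientMap_projectivization_mk.continuous hsub
      fun w hw => ⟨w.1, w.2, hw, rfl⟩

lemma pAct_mk (g : GL (Fin d) ℝ) {v : Vd d} (hv : v ≠ 0) (hgv : (↑g : Md d) *ᵥ v ≠ 0) :
    pAct g (Projectivization.mk ℝ v hv) = Projectivization.mk ℝ ((↑g : Md d) *ᵥ v) hgv :=
  Projectivization.map_mk _ _ v hv

lemma pAct_mul (g h : GL (Fin d) ℝ) : pAct (g * h) = pAct g ∘ pAct h := by
  funext x
  induction x using Projectivization.ind with
  | h v hv =>
    simp [pAct, Projectivization.map_mk, Matrix.mulVec_mulVec]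

lemma pAct_one : pAct (1 : GL (Fin d) ℝ) = id := by
  funext x
  induction x using Projectivization.ind with
  | h v hv => simp [pAct, Projectivization.map_mk]

lemma pAct_pow (g : GL (Fin d) ℝ) (n : ℕ) : pAct (g ^ n) = (pAct g)^[n] := by
  induction n with
  | zero => simp [pAct_one]
  | succ n ih => rw [pow_succ', pAct_mul, ih, Function.iterate_succ']

lemma pAct_pow_pAct_inv_pow (g : GL (Fin d) ℝ) (n : ℕ) (x : Projectivization ℝ (Vd d)) :
    pAct (g ^ n) (pAct (g⁻¹ ^ n) x) = x := by
  rw [← Function.comp_apply (f := pAct (g ^ n)), ← pAct_mul, inv_pow, mul_inv_cancel, pAct_one,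
    id]

lemma mapsTo_pAct_projSet {K : Set (Vd d)} {g : GL (Fin d) ℝ}
    (hg : Set.MapsTo ((↑g : Md d) *ᵥ ·) K K) : Set.MapsTo (pAct g) (projSet K) (projSet K) := by
  rintro _ ⟨v, hv, hvK, rfl⟩
  have hgv : (↑g : Md d) *ᵥ v ≠ 0 := fun h =>
    hv (by simpa using congrArg ((↑g⁻¹ : Md d) *ᵥ ·) h)
  exact ⟨_, hgv, hg hvK, pAct_mk g hv hgv⟩

lemma ConeAut.mapsTo_closure {C : Set (Vd d)} {g : GL (Fin d) ℝ} (hg : ConeAut C ↑g) :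
    Set.MapsTo ((↑g : Md d) *ᵥ ·) (closure C) (closure C) :=
  (hg.2 ▸ Set.mapsTo_image _ C).closure (continuous_const.matrix_mulVec continuous_id)

lemma ConeAut.inv {C : Set (Vd d)} {g : GL (Fin d) ℝ} (hg : ConeAut C ↑g) :
    ConeAut C ↑g⁻¹ := by
  refine ⟨Units.isUnit _, ?_⟩
  conv_lhs => rw [← hg.2]
  rw [Set.image_image]
  simp [Matrix.mulVec_mulVec]

lemma ConeAut.mapsTo_pAct_pow {C : Set (Vd d)} {g : GL (Fin d) ℝ} (hg : ConeAut C ↑g)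
    (n : ℕ) : Set.MapsTo (pAct (g ^ n)) (projSet (closure C)) (projSet (closure C)) :=
  pAct_pow g n ▸ (mapsTo_pAct_projSet hg.mapsTo_closure).iterate n

end Projective

section Spectrum

variable {d : ℕ}

lemma mem_eigMods_iff {g : Md d} {s : ℝ} :
    s ∈ eigMods g ↔ ∃ z ∈ spectrum ℂ (g.map (algebraMap ℝ ℂ)), ‖z‖ = s := by
  simp only [eigMods, Multiset.mem_map, Matrix.mem_spectrum_iff_isRoot_charpoly,
    Matrix.charpoly_map, Polynomial.mem_roots ((g.charpoly_monic.map _).ne_zero)]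

lemma card_eigMods (g : Md d) : Multiset.card (eigMods g) = d := by
  rw [eigMods, Multiset.card_map, ← (IsAlgClosed.splits _).natDegree_eq_card_roots,
    Polynomial.natDegree_map, Matrix.charpoly_natDegree_eq_dim, Fintype.card_fin]

lemma pos_and_inv_mem_eigMods_inv {g : GL (Fin d) ℝ} {s : ℝ} (hs : s ∈ eigMods (↑g : Md d)) :
    0 < s ∧ s⁻¹ ∈ eigMods (↑g⁻¹ : Md d) := by
  let gC : (Matrix (Fin d) (Fin d) ℂ)ˣ := Units.map (algebraMap ℝ ℂ).mapMatrix.toMonoidHom g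
  obtain ⟨z, hz, rfl⟩ := mem_eigMods_iff.1 hs
  have hz0 : z ≠ 0 := by
    rintro rfl
    exact (spectrum.zero_notMem_iff ℂ).2 gC.isUnit hz
  refine ⟨norm_pos_iff.2 hz0, mem_eigMods_iff.2 ⟨z⁻¹, ?_, norm_inv z⟩⟩
  exact spectrum.inv₀_mem_inv_iff (a := gC) |>.2 hz

lemma IsProximal.eq_one_of_mulVec_eq_smul {g : GL (Fin d) ℝ} (hp : IsProximal (↑g : Md d))
    {μ ν : ℝ} (hμ : ∀ s ∈ eigMods (↑g : Md d), s ≤ |μ|)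
    (hν : ∀ s ∈ eigMods (↑g⁻¹ : Md d), s ≤ |ν|) {v : Vd d} (hv : v ≠ 0)
    (hgv : (↑g : Md d) *ᵥ v = μ • v) (hgv' : (↑g⁻¹ : Md d) *ᵥ v = ν • v) : d = 1 := by
  have hμν : μ * ν = 1 := by
    have h : (↑g⁻¹ : Md d) *ᵥ ((↑g : Md d) *ᵥ v) = v := by
      rw [Matrix.mulVec_mulVec, ← Units.val_mul, inv_mul_cancel, Units.val_one,
        Matrix.one_mulVec]
    rw [hgv, Matrix.mulVec_smul, hgv', smul_smul] at h
    exact smul_left_injective ℝ hv (h.trans (one_smul ℝ v).symm)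
  have hall : ∀ s ∈ eigMods (↑g : Md d), s = |μ| := by
    intro s hs
    obtain ⟨hs0, hsinv⟩ := pos_and_inv_mem_eigMods_inv hs
    have hν' : |ν| = |μ|⁻¹ :=
      eq_inv_of_mul_eq_one_left (by rw [← abs_mul, mul_comm, hμν, abs_one])
    refine (hμ s hs).antisymm ((inv_le_inv₀ hs0 (hs0.trans_le (hμ s hs))).1 ?_)
    exact hν' ▸ hν _ hsinv
  obtain ⟨r, hr, hcount, -⟩ := hp
  rw [← card_eigMods (↑g : Md d), ← hcount, Multiset.count_eq_card.2]
  intro s hs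
  rw [hall s hs, hall r hr]

end Spectrum

section Dynamics

variable {d : ℕ}

lemma eq_zero_of_mulVec_eq_zero_of_dim_one {T : Md 1} {v : Vd 1} (hv : v ≠ 0)
    (h : T *ᵥ v = 0) : T = 0 := by
  have hv0 : v 0 ≠ 0 := fun h0 => hv (funext fun i => Fin.fin_one_eq_zero i ▸ h0)
  have hT : T 0 0 * v 0 = 0 := by simpa [Matrix.mulVec, dotProduct] using congrFun h 0
  ext i j
  rw [Fin.fin_one_eq_zero i, Fin.fin_one_eq_zero j]
  exact (mul_eq_zero.1 hT).resolve_right hv0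

lemma pow_mulVec_eq_pow_smul {g : Md d} {μ : ℝ} {v : Vd d} (hgv : g *ᵥ v = μ • v)
    (n : ℕ) : g ^ n *ᵥ v = μ ^ n • v := by
  induction n with
  | zero => simp
  | succ n ih => rw [pow_succ', ← Matrix.mulVec_mulVec, ih, Matrix.mulVec_smul, hgv, smul_smul,
      ← pow_succ]

lemma exists_tendsto_mul_pow_of_mulVec_eq_smul {g T : Md d} {c : ℕ → ℝ} {μ : ℝ}
    {v : Vd d} (hconv : Tendsto (fun n => c n • g ^ n) atTop (𝓝 T)) (hv : v ≠ 0)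
    (hgv : g *ᵥ v = μ • v) :
    ∃ t : ℝ, T *ᵥ v = t • v ∧ Tendsto (fun n => c n * μ ^ n) atTop (𝓝 t) := by
  have hlim : Tendsto (fun n => (c n * μ ^ n) • v) atTop (𝓝 (T *ᵥ v)) := by
    refine (((continuous_id.matrix_mulVec continuous_const).tendsto T).comp hconv).congr
      fun n => ?_
    simp [Matrix.smul_mulVec, pow_mulVec_eq_pow_smul hgv, smul_smul]
  have hemb := isClosedEmbedding_smul_left (𝕜 := ℝ) hv
  obtain ⟨t, ht⟩ : T *ᵥ v ∈ Set.range (· • v) :=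
    hemb.isClosed_range.mem_of_tendsto hlim (Eventually.of_forall fun n => ⟨_, rfl⟩)
  refine ⟨t, ht.symm, ?_⟩
  rw [hemb.tendsto_nhds_iff]
  simpa [Function.comp_def, ht] using hlim

lemma mulVec_eq_smul_of_span_eq_eigenspace {g : Md d} {μ : ℝ} {v : Vd d}
    (h : ℝ ∙ v = Module.End.eigenspace (Matrix.toLin' g) μ) : g *ᵥ v = μ • v := by
  have hv := Module.End.mem_eigenspace_iff.1 (h ▸ Submodule.mem_span_singleton_self v)
  rwa [Matrix.toLin'_apply] at hv

lemma mulVec_mem_span_of_tendsto_smul_pow {g T : Md d} {c : ℕ → ℝ} {μ : ℝ} {v : Vd d}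
    (hconv : Tendsto (fun n => c n • g ^ n) atTop (𝓝 T))
    (h : ℝ ∙ v = Module.End.eigenspace (Matrix.toLin' g) μ) (hTv : T *ᵥ v ≠ 0) (w : Vd d) :
    T *ᵥ w ∈ ℝ ∙ v := by
  have hv : v ≠ 0 := fun hv => hTv (by rw [hv, Matrix.mulVec_zero])
  obtain ⟨t, hTt, ht⟩ :=
    exists_tendsto_mul_pow_of_mulVec_eq_smul hconv hv (mulVec_eq_smul_of_span_eq_eigenspace h)
  have ht0 : t ≠ 0 := by
    rintro rfl
    exact hTv (by rw [hTt, zero_smul])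
  rw [h, Module.End.mem_eigenspace_iff, Matrix.toLin'_apply, Matrix.mulVec_mulVec,
    mul_eq_smul_of_tendsto_smul_pow hconv ht ht0, Matrix.smul_mulVec]

lemma eventually_pow_mulVec_mem_affineCone {K : Set (Vd d)} (hK : IsClosed K)
    (hcone : ∀ v ∈ K, ∀ t : ℝ, 0 < t → t • v ∈ K) {g T : Md d} {c : ℕ → ℝ}
    (hconv : Tendsto (fun n => c n • g ^ n) atTop (𝓝 T))
    {UA UB : Set (Projectivization ℝ (Vd d))} (hUA : IsOpen UA) (hUB : IsOpen UB)
    (hT : ∀ v ∈ K, v ≠ 0 → v ∉ affineCone UB → T *ᵥ v ∈ affineCone UA) :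
    ∀ᶠ n in atTop, ∀ v ∈ K, v ≠ 0 → v ∉ affineCone UB → g ^ n *ᵥ v ∈ affineCone UA := by
  set S := Metric.sphere (0 : Vd d) 1 ∩ K ∩ (affineCone UB)ᶜ
  have hS : IsCompact S :=
    ((isCompact_sphere 0 1).inter_right hK).inter_right (isOpen_affineCone hUB).isClosed_compl
  have hnear : ∀ v ∈ S, ∀ᶠ p : Md d × Vd d in 𝓝 (T, v), p.1 *ᵥ p.2 ∈ affineCone UA := by
    rintro v ⟨⟨hv1, hvK⟩, hvB⟩
    have hv0 : v ≠ 0 := ne_zero_of_mem_unit_sphere ⟨v, hv1⟩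
    exact (continuous_fst.matrix_mulVec continuous_snd).continuousAt.eventually_mem
      ((isOpen_affineCone hUA).mem_nhds (hT v hvK hv0 hvB))
  filter_upwards [hconv.eventually (hS.eventually_forall_of_forall_eventually
    (P := fun M v => M *ᵥ v ∈ affineCone UA) hnear)]
    with n hn v hvK hv0 hvB
  -- scale `v` onto the unit sphere, where the uniform estimate `hn` applies
  have hnorm : 0 < ‖v‖ := norm_pos_iff.2 hv0
  have hu : ‖v‖⁻¹ • v ∈ S := by
    refine ⟨⟨?_, hcone v hvK _ (inv_pos.2 hnorm)⟩, fun h => hvB (mem_affineCone_of_smul_mem h)⟩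
    simp [norm_smul, hnorm.ne']
  have := hn _ hu
  rw [Matrix.smul_mulVec, Matrix.mulVec_smul, smul_smul] at this
  exact mem_affineCone_of_smul_mem this

lemma mulVec_mem_affineCone {K : Set (Vd d)} {T : Md d} {vP vM : Vd d}
    (hvP0 : vP ≠ 0) (hvM0 : vM ≠ 0) (hrange : ∀ w, T *ᵥ w ∈ ℝ ∙ vP)
    (hker : ∀ w ∈ K, w ≠ 0 → T *ᵥ w = 0 → ∃ e : ℝ, w = e • vM)
    {UA UB : Set (Projectivization ℝ (Vd d))} (hPA : Projectivization.mk ℝ vP hvP0 ∈ UA)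
    (hMB : Projectivization.mk ℝ vM hvM0 ∈ UB) :
    ∀ v ∈ K, v ≠ 0 → v ∉ affineCone UB → T *ᵥ v ∈ affineCone UA := by
  intro v hvK hv0 hvB
  have hTv : T *ᵥ v ≠ 0 := by
    intro h
    obtain ⟨e, rfl⟩ := hker v hvK hv0 h
    exact hvB (smul_mem_affineCone (left_ne_zero_of_smul hv0) ⟨hvM0, hMB⟩)
  obtain ⟨κ, hκ⟩ := Submodule.mem_span_singleton.1 (hrange v)
  rw [← hκ] at hTv ⊢
  exact smul_mem_affineCone (left_ne_zero_of_smul hTv) ⟨hvP0, hPA⟩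

lemma eventually_pAct_pow_mem {K : Set (Vd d)} (hK : IsClosed K)
    (hcone : ∀ v ∈ K, ∀ t : ℝ, 0 < t → t • v ∈ K) {g : GL (Fin d) ℝ} {T : Md d} {c : ℕ → ℝ}
    (hconv : Tendsto (fun n => c n • (↑g : Md d) ^ n) atTop (𝓝 T))
    {UA UB : Set (Projectivization ℝ (Vd d))} (hUA : IsOpen UA) (hUB : IsOpen UB)
    (hT : ∀ v ∈ K, v ≠ 0 → v ∉ affineCone UB → T *ᵥ v ∈ affineCone UA) :
    ∀ᶠ n in atTop, ∀ x ∈ projSet K, x ∉ UB → pAct (g ^ n) x ∈ UA := by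
  filter_upwards [eventually_pow_mulVec_mem_affineCone hK hcone hconv hUA hUB hT]
    with n hn x hx hxB
  obtain ⟨v, hv0, hvK, rfl⟩ := hx
  obtain ⟨hgv, hgvA⟩ := hn v hvK hv0 fun h => hxB h.2
  rwa [pAct_mk _ hv0 (by simpa using hgv)]

end Dynamics

theorem stmt12_general {d : ℕ} (C : Set (Vd d)) (hC : IsProperCone C) (γ : GL (Fin d) ℝ)
    (hγ : ConeAut C (↑γ : Md d)) (hp : IsProximal (↑γ : Md d))
    (vP vM : Vd d) (hvP0 : vP ≠ 0) (hvM0 : vM ≠ 0)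
    (hvPc : vP ∈ closure C)
    (hlP : IsTopEigenline (↑γ : Md d) (ℝ ∙ vP))
    (hlM : IsTopEigenline (↑γ⁻¹ : Md d) (ℝ ∙ vM))
    (T : Md d) (hT0 : T ≠ 0) (c : ℕ → ℝ)
    (hconv : Tendsto (fun n => c n • (↑γ : Md d) ^ n) atTop (nhds T))
    (hker : ∀ w : Vd d, w ≠ 0 → (w ∈ closure C ∨ -w ∈ closure C) → T.mulVec w = 0 →
      ∃ e : ℝ, w = e • vM) :
    ∀ A B : Set (Projectivization ℝ (Vd d)),
      A ⊆ closure (projSet C) → B ⊆ closure (projSet C) →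
      A ∈ nhdsWithin (Projectivization.mk ℝ vP hvP0) (closure (projSet C)) →
      B ∈ nhdsWithin (Projectivization.mk ℝ vM hvM0) (closure (projSet C)) →
      ∃ N : ℕ, ∀ n ≥ N,
        (∀ x ∈ closure (projSet C) \ B, pAct (γ ^ n) x ∈ A) ∧
        (∀ x ∈ closure (projSet C) \ A, pAct (γ⁻¹ ^ n) x ∈ B) := by
  obtain ⟨μ, hμ, hμP, -⟩ := hlP
  have hγvP := mulVec_eq_smul_of_span_eq_eigenspace hμP
  have hTvP : T *ᵥ vP ≠ 0 := by
    intro h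
    obtain ⟨e, he⟩ := hker vP hvP0 (Or.inl hvPc) h
    obtain ⟨ν, hν, hνM, -⟩ := hlM
    have hγvP' : (↑γ⁻¹ : Md d) *ᵥ vP = ν • vP := by
      rw [he, Matrix.mulVec_smul, mulVec_eq_smul_of_span_eq_eigenspace hνM, smul_comm]
    have hd := hp.eq_one_of_mulVec_eq_smul hμ hν hvP0 hγvP hγvP'
    subst hd
    exact hT0 (eq_zero_of_mulVec_eq_zero_of_dim_one hvP0 h)
  intro A B _ _ hA hB
  rw [closure_projSet hC.2.2.2.1] at hA hB ⊢
  obtain ⟨UA, hUA, hPA, hUAA⟩ := mem_nhdsWithin.1 hA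
  obtain ⟨UB, hUB, hMB, hUBB⟩ := mem_nhdsWithin.1 hB
  refine exists_forall_mapsTo_of_eventually (pAct_pow_pAct_inv_pow γ) hγ.mapsTo_pAct_pow
    hγ.inv.mapsTo_pAct_pow hUAA hUBB (eventually_pAct_pow_mem isClosed_closure
      (smul_mem_closure_of_smul_mem hC.2.2.2.1) hconv hUA hUB ?_)
  exact mulVec_mem_affineCone hvP0 hvM0 (mulVec_mem_span_of_tendsto_smul_pow hconv hμP hTvP)
    (fun w hw hw0 => hker w hw0 (Or.inl hw)) hPA hMB

/-- a bi-proximal automorphism `γ` of a properly convex domain whose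
limit endomorphism `T_γ = lim γ^n` has projectivized kernel meeting `closure Ω` only
in `ℓ⁻_γ` has north-south dynamics on `closure Ω`. -/
theorem stmt12 {d : ℕ} (C : Set (Vd d)) (hC : IsProperCone C) (γ : GL (Fin d) ℝ)
    (hγ : ConeAut C (↑γ : Md d)) (hp : IsProximal (↑γ : Md d)) (hp' : IsProximal (↑γ⁻¹ : Md d))
    (vP vM : Vd d) (hvP0 : vP ≠ 0) (hvM0 : vM ≠ 0)
    (hvPc : vP ∈ closure C) (hvMc : vM ∈ closure C)
    (hlP : IsTopEigenline (↑γ : Md d) (ℝ ∙ vP))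
    (hlM : IsTopEigenline (↑γ⁻¹ : Md d) (ℝ ∙ vM))
    (T : Md d) (hT0 : T ≠ 0) (c : ℕ → ℝ)
    (hconv : Tendsto (fun n => c n • (↑γ : Md d) ^ n) atTop (nhds T))
    (hker : ∀ w : Vd d, w ≠ 0 → (w ∈ closure C ∨ -w ∈ closure C) → T.mulVec w = 0 →
      ∃ e : ℝ, w = e • vM) :
    ∀ A B : Set (Projectivization ℝ (Vd d)),
      A ⊆ closure (projSet C) → B ⊆ closure (projSet C) →
      A ∈ nhdsWithin (Projectivization.mk ℝ vP hvP0) (closure (projSet C)) →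
      B ∈ nhdsWithin (Projectivization.mk ℝ vM hvM0) (closure (projSet C)) →
      ∃ N : ℕ, ∀ n ≥ N,
        (∀ x ∈ closure (projSet C) \ B, pAct (γ ^ n) x ∈ A) ∧
        (∀ x ∈ closure (projSet C) \ A, pAct (γ⁻¹ ^ n) x ∈ B) :=
  stmt12_general C hC γ hγ hp vP vM hvP0 hvM0 hvPc hlP hlM T hT0 c hconv hker
end
end

section
/- Let Ω ⊂ P(ℝ^d) be a properly convex domain, γ ∈ Aut(Ω), and suppose γ fixes two distinct points x, y ∈ ∂Ω with (x,y) ⊂ Ω, and inf_{p∈Ω} H_Ω(p, γp) = 0. If moreover x and y are eigenlines of γ, then all eigenvalues of a lift of γ to SL±(d,ℝ) have the same absolute value, and γ fixes every point of the segment (x,y). -/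
open Matrix Topology Filter
open scoped MatrixGroups

noncomputable section

/-!
If `t • w - g w` lies in the closed cone for some interior `w`, then every complex eigenvalue
`z` of `g` satisfies `‖z‖ ≤ t`. Otherwise take an eigenvector `ζ` and a unit `c`: the small
perturbations `w ± ε Re(l ζ)` (`‖l‖ = 1`) stay in the cone, and with `l` chosen so that
`gⁿ Re(l ζ) = ‖z‖ⁿ Re(c ζ)`, adding `tⁿ w - gⁿ w` and dividing by `‖z‖ⁿ` puts
`(t / ‖z‖)ⁿ w ± ε Re(c ζ)` in the closed cone. Letting `n → ∞`, salience gives `Re(c ζ) = 0`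
for every unit `c`, so `ζ = 0`.
Applied to `g` and to `g⁻¹`, this bounds the Hilbert displacement of `g` below by
`½ log (‖z‖ / ‖z'‖)` for any two eigenvalues `z, z'`, so a vanishing infimum forces all
eigenvalue moduli to coincide. The eigenvalues of `g` on the eigenlines `u, v` in the closed
cone are then positive reals of equal modulus, hence equal, and `g` is a homothety on their span.
-/

open Set

theorem exists_pos_forall_add_smul_mem {E : Type*} [SeminormedAddCommGroup E] [NormedSpace ℝ E]
    {U : Set E} (hU : IsOpen U) {w : E} (hw : w ∈ U) (R : ℝ) :
    ∃ ε : ℝ, 0 < ε ∧ ∀ x : E, ‖x‖ ≤ R → w + ε • x ∈ U := by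
  obtain ⟨δ, hδ, hball⟩ := Metric.isOpen_iff.mp hU w hw
  refine ⟨δ / (|R| + 1), by positivity, fun x hx => hball ?_⟩
  rw [Metric.mem_ball, dist_eq_norm, add_sub_cancel_left, norm_smul,
    Real.norm_of_nonneg (by positivity)]
  calc δ / (|R| + 1) * ‖x‖ ≤ δ / (|R| + 1) * |R| := by gcongr; exact hx.trans (le_abs_self R)
    _ < δ / (|R| + 1) * (|R| + 1) := by gcongr; linarith
    _ = δ := by field_simp

variable {d : ℕ} {C : Set (Vd d)}

namespace IsProperCone

theorem smul_mem_closure (hC : IsProperCone C) {v : Vd d} (hv : v ∈ closure C) {t : ℝ}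
    (ht : 0 < t) : t • v ∈ closure C :=
  MapsTo.closure (fun w hw => hC.2.2.2.1 w hw t ht) (continuous_const_smul t) hv

theorem add_mem_closure (hC : IsProperCone C) {a b : Vd d} (ha : a ∈ closure C)
    (hb : b ∈ closure C) : a + b ∈ closure C := by
  have hmid : (1 / 2 : ℝ) • a + (1 / 2 : ℝ) • b ∈ closure C :=
    hC.2.1.closure ha hb (by norm_num) (by norm_num) (by norm_num)
  convert hC.smul_mem_closure hmid two_pos using 1
  module

theorem zero_mem_closure (hC : IsProperCone C) : (0 : Vd d) ∈ closure C := by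
  obtain ⟨v, hv⟩ := hC.2.2.1
  have hlim : Tendsto (fun n : ℕ => (1 / (n + 1) : ℝ) • v) atTop (𝓝 0) := by
    simpa using (tendsto_one_div_add_atTop_nhds_zero_nat (𝕜 := ℝ)).smul_const v
  exact mem_closure_of_tendsto hlim (.of_forall fun n => hC.2.2.2.1 v hv _ (by positivity))

theorem exists_smul_sub_mem (hC : IsProperCone C) {w : Vd d} (hw : w ∈ C) (x : Vd d) :
    ∃ t : ℝ, 0 < t ∧ t • w - x ∈ C := by
  obtain ⟨ε, hε, hmem⟩ := exists_pos_forall_add_smul_mem hC.1 hw ‖x‖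
  refine ⟨ε⁻¹, inv_pos.mpr hε, ?_⟩
  convert hC.2.2.2.1 _ (hmem (-x) (norm_neg x).le) ε⁻¹ (inv_pos.mpr hε) using 1
  rw [smul_add, smul_smul, inv_mul_cancel₀ hε.ne', one_smul, sub_eq_add_neg]

end IsProperCone

theorem mapsTo_closure_mulVec {g : Md d} (hg : MapsTo g.mulVec C C) :
    MapsTo g.mulVec (closure C) (closure C) :=
  hg.closure (Matrix.mulVecLin g).continuous_of_finiteDimensional

theorem mapsTo_closure_pow {g : Md d} (hg : MapsTo g.mulVec C C) (n : ℕ) :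
    MapsTo (g ^ n).mulVec (closure C) (closure C) := by
  induction n with
  | zero => intro v hv; simpa using hv
  | succ n ih =>
    intro v hv
    rw [pow_succ, ← mulVec_mulVec]
    exact ih (mapsTo_closure_mulVec hg hv)

theorem pow_smul_sub_pow_mulVec_mem_closure (hC : IsProperCone C) {g : Md d}
    (hg : MapsTo g.mulVec C C) {w : Vd d} {t : ℝ} (ht : 0 < t)
    (hm : t • w - g *ᵥ w ∈ closure C) (n : ℕ) : t ^ n • w - (g ^ n) *ᵥ w ∈ closure C := by
  induction n with
  | zero => simpa using hC.zero_mem_closure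
  | succ n ih =>
    convert hC.add_mem_closure (hC.smul_mem_closure ih ht) (mapsTo_closure_pow hg n hm) using 1
    rw [mulVec_sub, mulVec_smul, mulVec_mulVec, ← pow_succ, smul_sub, smul_smul, ← pow_succ']
    abel

def reVec (ξ : Fin d → ℂ) : Vd d := fun i => (ξ i).re

theorem mulVec_reVec (g : Md d) (ξ : Fin d → ℂ) :
    g *ᵥ reVec ξ = reVec (g.map (algebraMap ℝ ℂ) *ᵥ ξ) := by
  funext i
  simp [reVec, mulVec, dotProduct, Complex.re_sum]

theorem reVec_ofReal_smul (r : ℝ) (ξ : Fin d → ℂ) : reVec ((r : ℂ) • ξ) = r • reVec ξ := by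
  funext i
  simp [reVec]

theorem reVec_neg (ξ : Fin d → ℂ) : reVec (-ξ) = -reVec ξ := by
  funext i
  simp [reVec]

theorem norm_reVec_le (ξ : Fin d → ℂ) : ‖reVec ξ‖ ≤ ‖ξ‖ :=
  (pi_norm_le_iff_of_nonneg (norm_nonneg ξ)).mpr fun i =>
    (Complex.abs_re_le_norm (ξ i)).trans (norm_le_pi_norm ξ i)

theorem eq_zero_of_reVec_eq_zero {ξ : Fin d → ℂ} (hre : reVec ξ = 0)
    (him : reVec (-Complex.I • ξ) = 0) : ξ = 0 := by
  funext i
  refine Complex.ext (congrFun hre i) ?_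
  simpa [reVec] using congrFun him i

theorem pow_mulVec_eq_of_mulVec_eq {ι K : Type*} [Fintype ι] [DecidableEq ι] [CommRing K]
    {A : Matrix ι ι K} {ζ : ι → K} {z : K} (h : A *ᵥ ζ = z • ζ) (n : ℕ) :
    (A ^ n) *ᵥ ζ = z ^ n • ζ := by
  induction n with
  | zero => simp
  | succ n ih => rw [pow_succ, ← mulVec_mulVec, h, mulVec_smul, ih, smul_smul, pow_succ']

theorem mulVec_eq_inv_smul_of_mul_eq_one {ι K : Type*} [Fintype ι] [DecidableEq ι] [Field K]
    {A B : Matrix ι ι K} (hBA : B * A = 1) {ζ : ι → K} {z : K} (h : A *ᵥ ζ = z • ζ)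
    (hz : z ≠ 0) : B *ᵥ ζ = z⁻¹ • ζ := by
  rw [eq_inv_smul_iff₀ hz, ← mulVec_smul, ← h, mulVec_mulVec, hBA, one_mulVec]

theorem smul_reVec_mem_closure_of_lt_norm (hC : IsProperCone C) {g : Md d}
    (hg : MapsTo g.mulVec C C) {z : ℂ} {ζ : Fin d → ℂ}
    (heig : g.map (algebraMap ℝ ℂ) *ᵥ ζ = z • ζ) {w : Vd d} {t : ℝ} (ht : 0 < t)
    (hm : t • w - g *ᵥ w ∈ closure C) (hlt : t < ‖z‖) {ε : ℝ}
    (hε : ∀ x : Vd d, ‖x‖ ≤ ‖ζ‖ → w + ε • x ∈ C) {c : ℂ} (hc : ‖c‖ = 1) :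
    ε • reVec (c • ζ) ∈ closure C := by
  set r := ‖z‖
  have hr : 0 < r := ht.trans hlt
  have hz : z ≠ 0 := norm_pos_iff.mp hr
  have hn : ∀ n : ℕ, (t / r) ^ n • w + ε • reVec (c • ζ) ∈ closure C := by
    intro n
    have hrn : 0 < r ^ n := pow_pos hr n
    set l : ℂ := c * ((r ^ n : ℝ) : ℂ) / z ^ n
    have hl : ‖l‖ = 1 := by simp [l, hc, norm_pow, r, hz]
    have hzl : l * z ^ n = ((r ^ n : ℝ) : ℂ) * c := by
      simp only [l]
      field_simp
    -- `l` is chosen so that `l zⁿ = rⁿ c`, whence `gⁿ Re(l ζ) = rⁿ Re(c ζ)`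
    have hpush : (g ^ n) *ᵥ (w + ε • reVec (l • ζ))
        = (g ^ n) *ᵥ w + (ε * r ^ n) • reVec (c • ζ) := by
      rw [mulVec_add, mulVec_smul, mulVec_reVec, Matrix.map_pow, mulVec_smul,
        pow_mulVec_eq_of_mulVec_eq heig, smul_smul, hzl, mul_smul, reVec_ofReal_smul, smul_smul]
    have hmem : (g ^ n) *ᵥ w + (ε * r ^ n) • reVec (c • ζ) ∈ closure C := by
      rw [← hpush]
      refine mapsTo_closure_pow hg n (subset_closure (hε _ ?_))
      exact (norm_reVec_le _).trans (by rw [norm_smul, hl, one_mul])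
    have hsum := hC.add_mem_closure (pow_smul_sub_pow_mulVec_mem_closure hC hg ht hm n) hmem
    rw [← add_assoc, sub_add_cancel] at hsum
    convert hC.smul_mem_closure hsum (inv_pos.mpr hrn) using 1
    rw [smul_add, smul_smul, smul_smul, div_pow, div_eq_inv_mul, mul_left_comm,
      inv_mul_cancel₀ hrn.ne', mul_one]
  have hlim : Tendsto (fun n : ℕ => (t / r) ^ n • w + ε • reVec (c • ζ)) atTop
      (𝓝 (ε • reVec (c • ζ))) := by
    simpa using ((tendsto_pow_atTop_nhds_zero_of_lt_one (by positivity)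
      ((div_lt_one hr).mpr hlt)).smul_const w).add_const (ε • reVec (c • ζ))
  exact isClosed_closure.mem_of_tendsto hlim (.of_forall hn)

theorem norm_le_of_smul_sub_mulVec_mem_closure (hC : IsProperCone C) {g : Md d}
    (hg : MapsTo g.mulVec C C) {z : ℂ} {ζ : Fin d → ℂ} (hζ : ζ ≠ 0)
    (heig : g.map (algebraMap ℝ ℂ) *ᵥ ζ = z • ζ) {w : Vd d} (hw : w ∈ C) {t : ℝ} (ht : 0 < t)
    (hm : t • w - g *ᵥ w ∈ closure C) : ‖z‖ ≤ t := by
  by_contra! hlt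
  obtain ⟨ε, hε, hmem⟩ := exists_pos_forall_add_smul_mem hC.1 hw ‖ζ‖
  have hre : ∀ c : ℂ, ‖c‖ = 1 → reVec (c • ζ) = 0 := by
    intro c hc
    have hpos := smul_reVec_mem_closure_of_lt_norm hC hg heig ht hm hlt hmem hc
    have hneg := smul_reVec_mem_closure_of_lt_norm hC hg heig ht hm hlt hmem
      (c := -c) (by rw [norm_neg, hc])
    rw [neg_smul, reVec_neg, smul_neg] at hneg
    exact (smul_eq_zero.mp (hC.2.2.2.2 _ hpos hneg)).resolve_left hε.ne'
  exact hζ (eq_zero_of_reVec_eq_zero (by simpa using hre 1 norm_one) (hre _ (by simp)))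

theorem norm_le_gaugeM (hC : IsProperCone C) {g : Md d} (hg : MapsTo g.mulVec C C) {z : ℂ}
    {ζ : Fin d → ℂ} (hζ : ζ ≠ 0) (heig : g.map (algebraMap ℝ ℂ) *ᵥ ζ = z • ζ) {w : Vd d}
    (hw : w ∈ C) : ‖z‖ ≤ gaugeM C (g *ᵥ w) w := by
  obtain ⟨t, ht, hmem⟩ := hC.exists_smul_sub_mem hw (g *ᵥ w)
  exact le_csInf ⟨t, ht, subset_closure hmem⟩ fun t ⟨ht, hm⟩ =>
    norm_le_of_smul_sub_mulVec_mem_closure hC hg hζ heig hw ht hm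

theorem exists_eigenvector_of_mem_eigMods {g : Md d} {r : ℝ} (hr : r ∈ eigMods g) :
    ∃ (z : ℂ) (ζ : Fin d → ℂ), ζ ≠ 0 ∧ g.map (algebraMap ℝ ℂ) *ᵥ ζ = z • ζ ∧ ‖z‖ = r := by
  obtain ⟨z, hz, rfl⟩ := Multiset.mem_map.mp hr
  have hroot : Module.End.HasEigenvalue (toLin' (g.map (algebraMap ℝ ℂ))) z := by
    rw [Module.End.hasEigenvalue_iff_isRoot_charpoly, charpoly_toLin', charpoly_map]
    exact (Polynomial.mem_roots'.mp hz).2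
  obtain ⟨ζ, hζ⟩ := hroot.exists_hasEigenvector
  exact ⟨z, ζ, hζ.2, by simpa using Module.End.mem_eigenspace_iff.mp hζ.1, rfl⟩

theorem abs_mem_eigMods {g : Md d} {u : Vd d} (hu0 : u ≠ 0) {α : ℝ} (h : g *ᵥ u = α • u) :
    |α| ∈ eigMods g := by
  have hroot : g.charpoly.IsRoot α := by
    rw [← charpoly_toLin', ← Module.End.hasEigenvalue_iff_isRoot_charpoly]
    exact Module.End.hasEigenvalue_of_hasEigenvector
      ⟨Module.End.mem_eigenspace_iff.mpr (by simpa using h), hu0⟩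
  refine Multiset.mem_map.mpr ⟨algebraMap ℝ ℂ α, ?_, by simp⟩
  exact Polynomial.mem_roots'.mpr ⟨(g.charpoly_monic.map _).ne_zero, hroot.map⟩

theorem eigenvalue_ne_zero_of_isUnit {g : Md d} (hg : IsUnit g) {z : ℂ} {ζ : Fin d → ℂ}
    (hζ : ζ ≠ 0) (heig : g.map (algebraMap ℝ ℂ) *ᵥ ζ = z • ζ) : z ≠ 0 := by
  rintro rfl
  have hG : IsUnit (g.map (algebraMap ℝ ℂ)) := hg.map (algebraMap ℝ ℂ).mapMatrix
  exact hζ (mulVec_injective_of_isUnit hG (by rw [heig, zero_smul, mulVec_zero]))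

theorem pos_of_mem_eigMods {g : Md d} (hg : IsUnit g) {r : ℝ} (hr : r ∈ eigMods g) : 0 < r := by
  obtain ⟨z, ζ, hζ, heig, rfl⟩ := exists_eigenvector_of_mem_eigMods hr
  exact norm_pos_iff.mpr (eigenvalue_ne_zero_of_isUnit hg hζ heig)

namespace ConeAut

variable {g : Md d}

theorem mapsTo (hg : ConeAut C g) : MapsTo g.mulVec C C := by
  intro v hv
  rw [← hg.2]
  exact mem_image_of_mem _ hv

theorem inv_s13 (hg : ConeAut C g) : ConeAut C g⁻¹ := by
  refine ⟨isUnit_nonsing_inv_iff.mpr hg.1, ?_⟩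
  conv_lhs => rw [← hg.2]
  rw [image_image]
  simp [mulVec_mulVec, nonsing_inv_mul _ ((isUnit_iff_isUnit_det g).mp hg.1)]

theorem inv_norm_le_gaugeM (hC : IsProperCone C) (hg : ConeAut C g) {z : ℂ} {ζ : Fin d → ℂ}
    (hζ : ζ ≠ 0) (heig : g.map (algebraMap ℝ ℂ) *ᵥ ζ = z • ζ) (hz : z ≠ 0) {w : Vd d}
    (hw : w ∈ C) : ‖z‖⁻¹ ≤ gaugeM C w (g *ᵥ w) := by
  have hinv : g⁻¹ * g = 1 := nonsing_inv_mul g ((isUnit_iff_isUnit_det g).mp hg.1)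
  have hinvC : g⁻¹.map (algebraMap ℝ ℂ) * g.map (algebraMap ℝ ℂ) = 1 := by
    simp only [← RingHom.mapMatrix_apply, ← map_mul, hinv, map_one]
  have := norm_le_gaugeM hC hg.inv_s13.mapsTo hζ
    (mulVec_eq_inv_smul_of_mul_eq_one hinvC heig hz) (hg.mapsTo hw)
  rwa [mulVec_mulVec, hinv, one_mulVec, norm_inv] at this

theorem half_log_div_le_hilbertDist (hC : IsProperCone C) (hg : ConeAut C g) {r s : ℝ}
    (hr : r ∈ eigMods g) (hs : s ∈ eigMods g) {w : Vd d} (hw : w ∈ C) :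
    1 / 2 * Real.log (r / s) ≤ hilbertDist C w (g *ᵥ w) := by
  obtain ⟨z, ζ, hζ, heig, rfl⟩ := exists_eigenvector_of_mem_eigMods hr
  obtain ⟨z', ζ', hζ', heig', rfl⟩ := exists_eigenvector_of_mem_eigMods hs
  have hz := eigenvalue_ne_zero_of_isUnit hg.1 hζ heig
  have hz' := eigenvalue_ne_zero_of_isUnit hg.1 hζ' heig'
  have hforward := norm_le_gaugeM hC hg.mapsTo hζ heig hw
  have hbackward := hg.inv_norm_le_gaugeM hC hζ' heig' hz' hw
  unfold hilbertDist
  gcongr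
  rw [div_eq_inv_mul]
  exact mul_le_mul hbackward hforward (norm_nonneg z)
    ((inv_pos.mpr (norm_pos_iff.mpr hz')).le.trans hbackward)

theorem le_of_mem_eigMods_of_isGLB_zero (hC : IsProperCone C) (hg : ConeAut C g)
    (hinf : IsGLB ((fun w => hilbertDist C w (g *ᵥ w)) '' C) 0) {r s : ℝ}
    (hr : r ∈ eigMods g) (hs : s ∈ eigMods g) : r ≤ s := by
  have hs0 := pos_of_mem_eigMods hg.1 hs
  have hlog : 1 / 2 * Real.log (r / s) ≤ 0 :=
    hinf.2 (by rintro _ ⟨w, hw, rfl⟩; exact hg.half_log_div_le_hilbertDist hC hr hs hw)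
  have hrs := (Real.log_nonpos_iff (div_nonneg (pos_of_mem_eigMods hg.1 hr).le hs0.le)).mp
    (by linarith)
  exact (div_le_one hs0).mp hrs

theorem pos_of_mulVec_eq_smul (hC : IsProperCone C) (hg : ConeAut C g) {u : Vd d}
    (hu : u ∈ closure C) (hu0 : u ≠ 0) {α : ℝ} (h : g *ᵥ u = α • u) : 0 < α := by
  rcases lt_trichotomy α 0 with hneg | rfl | hpos
  · have hαu : α • u ∈ closure C := h ▸ mapsTo_closure_mulVec hg.mapsTo hu
    have hnegu := hC.smul_mem_closure hαu (inv_pos.mpr (neg_pos.mpr hneg))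
    rw [smul_smul, inv_neg, neg_mul, inv_mul_cancel₀ hneg.ne, neg_smul, one_smul] at hnegu
    exact absurd (hC.2.2.2.2 u hu hnegu) hu0
  · exact absurd (mulVec_injective_of_isUnit hg.1 (by rw [h, zero_smul, mulVec_zero])) hu0
  · exact hpos

end ConeAut

theorem stmt13_general {d : ℕ} (C : Set (Vd d)) (hC : IsProperCone C) (g : Md d) (hg : ConeAut C g)
    (u v : Vd d) (hu : u ∈ closure C) (hvcl : v ∈ closure C) (hu0 : u ≠ 0) (hv0 : v ≠ 0)
    (hfixu : ∃ α : ℝ, g.mulVec u = α • u) (hfixv : ∃ β : ℝ, g.mulVec v = β • v)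
    (hinf : IsGLB ((fun w => hilbertDist C w (g.mulVec w)) '' C) 0) :
    (∀ r ∈ eigMods g, ∀ s ∈ eigMods g, r = s) ∧
      ∀ s t : ℝ, 0 < s → 0 < t → ∃ μ : ℝ, g.mulVec (s • u + t • v) = μ • (s • u + t • v) := by
  have hmods : ∀ r ∈ eigMods g, ∀ s ∈ eigMods g, r ≤ s := fun _ hr _ hs =>
    hg.le_of_mem_eigMods_of_isGLB_zero hC hinf hr hs
  refine ⟨fun r hr s hs => (hmods r hr s hs).antisymm (hmods s hs r hr), ?_⟩
  obtain ⟨α, hα⟩ := hfixu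
  obtain ⟨β, hβ⟩ := hfixv
  have hαβ : |α| = |β| := (hmods _ (abs_mem_eigMods hu0 hα) _ (abs_mem_eigMods hv0 hβ)).antisymm
    (hmods _ (abs_mem_eigMods hv0 hβ) _ (abs_mem_eigMods hu0 hα))
  rw [abs_of_pos (hg.pos_of_mulVec_eq_smul hC hu hu0 hα),
    abs_of_pos (hg.pos_of_mulVec_eq_smul hC hvcl hv0 hβ)] at hαβ
  intro s t _ _
  exact ⟨α, by rw [mulVec_add, mulVec_smul, mulVec_smul, hα, hβ, ← hαβ]; module⟩

/-- if `γ ∈ Aut(Ω)` fixes two distinct boundary points `[u], [v]` that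
are eigenlines, the open segment `([u],[v])` lies in `Ω`, and the infimum of the
Hilbert displacement of `γ` is `0`, then all eigenvalues of a lift of `γ` have the
same modulus and `γ` fixes every point of the segment. -/
theorem stmt13 {d : ℕ} (C : Set (Vd d)) (hC : IsProperCone C) (g : Md d) (hg : ConeAut C g)
    (u v : Vd d) (hu : u ∈ closure C) (hvcl : v ∈ closure C) (hu0 : u ≠ 0) (hv0 : v ≠ 0)
    (hbdu : u ∉ C) (hbdv : v ∉ C)
    (hne : ∀ e : ℝ, u ≠ e • v)
    (hseg : ∀ s t : ℝ, 0 < s → 0 < t → s • u + t • v ∈ C)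
    (hfixu : ∃ α : ℝ, g.mulVec u = α • u) (hfixv : ∃ β : ℝ, g.mulVec v = β • v)
    (hinf : IsGLB ((fun w => hilbertDist C w (g.mulVec w)) '' C) 0) :
    (∀ r ∈ eigMods g, ∀ s ∈ eigMods g, r = s) ∧
      ∀ s t : ℝ, 0 < s → 0 < t → ∃ μ : ℝ, g.mulVec (s • u + t • v) = μ • (s • u + t • v) :=
  stmt13_general C hC g hg u v hu hvcl hu0 hv0 hfixu hfixv hinf

end
end
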